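/- arXiv:2007.08079 — 6 statements merged into one kernel-verified Lean document; each statement's English description precedes it below -/
import Mathlib

section
/- Let f : [0,∞) → ℝ be a continuous function that changes sign at most N−1 times in the interval (0,∞). If there exist N distinct real numbers p₁,…,p_N such that for every k = 1,…,N the function t ↦ t^{p_k} f(t) is (absolutely) integrable on (0,∞) and ∫₀^∞ t^{p_k} f(t) dt = 0, then f is identically equal to zero. -/
/-!
Induction on `N`. Let `r` be the smallest exponent and `g t = t ^ r * f t`. For `N = 1`, `g` has
constant sign and zero integral, so `g = 0`. Otherwise the tail `T u = ∫ s in Ioi u, g s` vanishes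
at `0` and at `∞`, so `g` changes sign at least once more than `T` (Rolle's theorem in integral
form), while by Fubini
  `∫ t in Ioi 0, t ^ (p - r - 1) * T t = (p - r)⁻¹ * ∫ t in Ioi 0, t ^ p * f t = 0`
for each of the other `N - 1` exponents `p`; these shifted exponents are distinct and `> -1`.
By induction `T = 0`, hence `g = 0` and `f = 0`. Sign changes are counted by alternating chains,
and continuity turns `ChangesSignAtMost f (N - 1)` into the absence of a chain of length `N`.
-/

open MeasureTheory Real Set

/-- A function `f` changes sign at most `N` times in `(0,∞)`: there exist points
`0 < t₁ ≤ ⋯ ≤ t_N` such that on each of the open intervals `(0,t₁), (t₁,t₂), …, (t_N,∞)`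
the function does not take both strictly positive and strictly negative values.
(Two points `0 < x ≤ y` lie in a common such open interval iff no `tⱼ` belongs to `[x,y]`.) -/
def ChangesSignAtMost (f : ℝ → ℝ) (N : ℕ) : Prop :=
  ∃ t : Fin N → ℝ, (∀ j, 0 < t j) ∧ Monotone t ∧
    ∀ x y : ℝ, 0 < x → x ≤ y → (∀ j, t j ∉ Set.Icc x y) →
      ¬(0 < f x ∧ f y < 0) ∧ ¬(f x < 0 ∧ 0 < f y)

open Filter Topology

/-- Only the values `x 0, …, x m` of the alternating chain matter. -/
def ChangesSignAtLeast (f : ℝ → ℝ) (m : ℕ) : Prop :=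
  ∃ x : ℕ → ℝ, (∀ i ≤ m, 0 < x i) ∧ ∀ i < m, x i < x (i + 1) ∧ f (x i) * f (x (i + 1)) < 0

theorem ChangesSignAtLeast.of_mul_left {f w : ℝ → ℝ} {m : ℕ} (hw : ∀ x, 0 < x → 0 < w x)
    (h : ChangesSignAtLeast (fun x => w x * f x) m) : ChangesSignAtLeast f m := by
  obtain ⟨x, hpos, hx⟩ := h
  refine ⟨x, hpos, fun i hi => ⟨(hx i hi).1, ?_⟩⟩
  have hw₀ := hw _ (hpos i hi.le)
  have hw₁ := hw _ (hpos (i + 1) hi)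
  have := (hx i hi).2
  nlinarith [mul_pos hw₀ hw₁]

theorem nonneg_or_nonpos_of_not_changesSignAtLeast_one {f : ℝ → ℝ}
    (h : ¬ChangesSignAtLeast f 1) : (∀ x, 0 < x → 0 ≤ f x) ∨ ∀ x, 0 < x → f x ≤ 0 := by
  by_contra! ⟨⟨a, ha, hfa⟩, b, hb, hfb⟩
  have chain (u v : ℝ) (hu : 0 < u) (hv : 0 < v) (huv : u < v) (hneg : f u * f v < 0) :
      ChangesSignAtLeast f 1 :=
    ⟨fun i => if i = 0 then u else v, fun i _ => by dsimp only; split_ifs <;> assumption,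
      fun i hi => by rw [Nat.lt_one_iff.1 hi]; exact ⟨huv, hneg⟩⟩
  rcases lt_trichotomy a b with hab | rfl | hab
  · exact h (chain a b ha hb hab (mul_neg_of_neg_of_pos hfa hfb))
  · exact hfa.not_gt hfb
  · exact h (chain b a hb ha hab (mul_neg_of_pos_of_neg hfb hfa))

theorem exists_mem_Ioc_of_mul_neg {f : ℝ → ℝ} {M : ℕ} {t : Fin M → ℝ}
    (ht : ∀ x y : ℝ, 0 < x → x ≤ y → (∀ j, t j ∉ Icc x y) →
      ¬(0 < f x ∧ f y < 0) ∧ ¬(f x < 0 ∧ 0 < f y))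
    {a b : ℝ} (ha : 0 < a) (hab : a < b) (hfa : ContinuousWithinAt f (Ioi a) a)
    (hneg : f a * f b < 0) : ∃ j, t j ∈ Ioc a b := by
  by_contra! hnot
  have hsq : 0 < f a * f a := mul_self_pos.2 (left_ne_zero_of_mul hneg.ne)
  obtain ⟨c, hc, hac, hcb⟩ := ((hfa.mul_const (f a)).eventually_const_lt hsq |>.and
    (Ioo_mem_nhdsGT hab)).exists
  have hcb' : f c * f b < 0 := by nlinarith
  have := ht c b (ha.trans hac) hcb.le fun j hj => hnot j ⟨hac.trans_le hj.1, hj.2⟩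
  rcases mul_neg_iff.1 hcb' with h | h
  exacts [this.1 h, this.2 h]

theorem ChangesSignAtMost.not_changesSignAtLeast {f : ℝ → ℝ} {M : ℕ}
    (hf : ContinuousOn f (Ioi 0)) (h : ChangesSignAtMost f M) : ¬ChangesSignAtLeast f (M + 1) := by
  obtain ⟨t, -, -, ht⟩ := h
  rintro ⟨x, hpos, hx⟩
  -- each link of the chain passes some `t j`, so the number of `t j ≤ x i` grows with `i`
  let count : ℝ → ℕ := fun z => (Finset.univ.filter fun j => t j ≤ z).card
  have hcount : ∀ i ≤ M + 1, i ≤ count (x i) := by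
    intro i hi
    induction i with
    | zero => exact Nat.zero_le _
    | succ i ih =>
      obtain ⟨hlt, hneg⟩ := hx i (by omega)
      have hcont : ContinuousWithinAt f (Ioi (x i)) (x i) :=
        (hf.continuousAt (Ioi_mem_nhds (hpos i (by omega)))).continuousWithinAt
      obtain ⟨j, hj⟩ := exists_mem_Ioc_of_mul_neg ht (hpos i (by omega)) hlt hcont hneg
      have : count (x i) < count (x (i + 1)) := by
        refine Finset.card_lt_card (Finset.ssubset_iff_of_subset ?_ |>.2 ⟨j, ?_, ?_⟩)
        · intro k
          simp only [Finset.mem_filter, Finset.mem_univ, true_and]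
          exact fun hk => hk.trans hlt.le
        · simpa using hj.2
        · simpa using hj.1
      exact (ih (by omega)).trans_lt this
  have := (hcount (M + 1) le_rfl).trans ((Finset.card_le_univ _).trans_eq (Fintype.card_fin M))
  omega

theorem eqOn_zero_of_nonneg_of_setIntegral_eq_zero {X : Type*} [TopologicalSpace X]
    [MeasurableSpace X] [OpensMeasurableSpace X] {μ : Measure X} [μ.IsOpenPosMeasure]
    {f : X → ℝ} {U : Set X}
    (hU : IsOpen U) (hf : ContinuousOn f U) (hnn : ∀ x ∈ U, 0 ≤ f x) (hi : IntegrableOn f U μ)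
    (h : ∫ x in U, f x ∂μ = 0) : EqOn f 0 U :=
  Measure.eqOn_open_of_ae_eq
    ((integral_eq_zero_iff_of_nonneg_ae (ae_restrict_of_forall_mem hU.measurableSet hnn) hi).1 h)
    hU hf continuousOn_const

theorem eqOn_zero_of_not_changesSignAtLeast_one {g : ℝ → ℝ} (hg : ContinuousOn g (Ioi 0))
    (hsign : ¬ChangesSignAtLeast g 1) (hint : IntegrableOn g (Ioi 0))
    (h0 : ∫ x in Ioi 0, g x = 0) : EqOn g 0 (Ioi 0) := by
  rcases nonneg_or_nonpos_of_not_changesSignAtLeast_one hsign with hnn | hnp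
  · exact eqOn_zero_of_nonneg_of_setIntegral_eq_zero isOpen_Ioi hg hnn hint h0
  · intro x hx
    have := eqOn_zero_of_nonneg_of_setIntegral_eq_zero (f := -g) isOpen_Ioi hg.neg
      (fun x hx => neg_nonneg.2 (hnp x hx)) hint.neg (by simp [integral_neg, h0]) hx
    simpa using this

theorem exists_mem_mul_pos_of_setIntegral_mul_pos {α : Type*} [MeasurableSpace α] {μ : Measure α}
    {g : α → ℝ} {s : Set α} (hs : MeasurableSet s) {v : ℝ} (h : 0 < (∫ x in s, g x ∂μ) * v) :
    ∃ c ∈ s, 0 < g c * v := by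
  by_contra! hle
  have := setIntegral_nonpos (μ := μ) hs hle
  rw [integral_mul_const] at this
  linarith

theorem exists_mem_Ioc_mul_integral_Ioi_neg {g : ℝ → ℝ} {a b : ℝ} (hg : IntegrableOn g (Ioi a))
    (hab : a < b) (hsign : (∫ s in Ioi a, g s) * ∫ s in Ioi b, g s ≤ 0)
    (hb : ∫ s in Ioi b, g s ≠ 0) : ∃ c ∈ Ioc a b, g c * ∫ s in Ioi b, g s < 0 := by
  obtain ⟨c, hc, hgc⟩ : ∃ c ∈ Ioc a b, 0 < g c * -∫ s in Ioi b, g s := by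
    apply exists_mem_mul_pos_of_setIntegral_mul_pos measurableSet_Ioc
    rw [← intervalIntegral.integral_of_le hab.le, ← intervalIntegral.integral_Ioi_sub_Ioi hg hab.le]
    nlinarith [mul_self_pos.2 hb]
  exact ⟨c, hc, by linarith⟩

/-- Rolle's theorem in integral form. With `T u = ∫ s in Ioi u, g s` and `T 0 = 0`, the integral
of `g` over `(0, x 0]`, `(x i, x (i + 1)]` and `(x (m + 1), ∞)` has the sign of `-T (x 0)`,
`-T (x (i + 1))` and `T (x (m + 1))` respectively. -/
theorem changesSignAtLeast_succ_of_integral_Ioi {g : ℝ → ℝ} (hg : IntegrableOn g (Ioi 0))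
    (hg0 : ∫ s in Ioi 0, g s = 0) {m : ℕ}
    (h : ChangesSignAtLeast (fun u => ∫ s in Ioi u, g s) (m + 1)) :
    ChangesSignAtLeast g (m + 2) := by
  obtain ⟨x, hpos, hx⟩ := h
  set T : ℝ → ℝ := fun u => ∫ s in Ioi u, g s
  have hTx : ∀ i ≤ m + 1, T (x i) ≠ 0 := by
    intro i hi
    rcases Nat.lt_or_ge i (m + 1) with h | h
    · exact left_ne_zero_of_mul (hx i h).2.ne
    · obtain rfl : i = m + 1 := by omega
      exact right_ne_zero_of_mul (hx m (by omega)).2.ne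
  let X : ℕ → ℝ := fun | 0 => 0 | i + 1 => x i
  have hleft : ∀ i ≤ m + 1, ∃ c ∈ Ioc (X i) (x i), g c * T (x i) < 0 := by
    rintro (_ | i) hi
    · exact exists_mem_Ioc_mul_integral_Ioi_neg hg (hpos 0 (by omega)) (by simp [X, hg0])
        (hTx 0 (by omega))
    · exact exists_mem_Ioc_mul_integral_Ioi_neg
        (hg.mono_set (Ioi_subset_Ioi (hpos i (by omega)).le)) (hx i (by omega)).1
        (hx i (by omega)).2.le (hTx _ hi)
  obtain ⟨d, hd, hgd⟩ : ∃ d ∈ Ioi (x (m + 1)), 0 < g d * T (x (m + 1)) :=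
    exists_mem_mul_pos_of_setIntegral_mul_pos measurableSet_Ioi (mul_self_pos.2 (hTx _ le_rfl))
  choose! c hc hgc using hleft
  refine ⟨fun i => if i ≤ m + 1 then c i else d, fun i hi => ?_, fun i hi => ?_⟩
  · dsimp only
    split_ifs with h
    · rcases i with _ | i
      · exact (hc 0 h).1
      · exact (hpos i (by omega)).trans (hc _ h).1
    · exact (hpos (m + 1) le_rfl).trans hd
  · dsimp only
    rcases Nat.lt_or_ge i (m + 1) with h | h
    · rw [if_pos (by omega), if_pos (by omega)]
      have hgc₀ := hgc i (by omega)
      have hgc₁ := hgc (i + 1) h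
      refine ⟨(hc i (by omega)).2.trans_lt (hc (i + 1) h).1, ?_⟩
      nlinarith [mul_pos_of_neg_of_neg hgc₀ hgc₁, (hx i h).2]
    · obtain rfl : i = m + 1 := by omega
      rw [if_pos le_rfl, if_neg (by omega)]
      have hgc₀ := hgc (m + 1) le_rfl
      refine ⟨(hc _ le_rfl).2.trans_lt hd, ?_⟩
      nlinarith [mul_neg_of_neg_of_pos hgc₀ hgd, mul_self_pos.2 (hTx _ le_rfl)]

theorem eqOn_zero_of_integral_Ioi_eq_zero {g : ℝ → ℝ} {a : ℝ} (hg : ContinuousOn g (Ioi a))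
    (hint : IntegrableOn g (Ioi a)) (h : ∀ u ∈ Ioi a, ∫ s in Ioi u, g s = 0) :
    EqOn g 0 (Ioi a) := by
  intro t ht
  have hderiv : HasDerivAt (fun u => ∫ s in t..u, g s) (g t) t :=
    intervalIntegral.integral_hasDerivAt_right (IntervalIntegrable.refl)
      (hg.stronglyMeasurableAtFilter isOpen_Ioi t ht) (hg.continuousAt (Ioi_mem_nhds ht))
  have hconst : (fun u => ∫ s in t..u, g s) =ᶠ[𝓝 t] fun _ => 0 := by
    filter_upwards [Ioi_mem_nhds (show a < t from ht)] with u hu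
    rw [← intervalIntegral.integral_Ioi_sub_Ioi' (hint.mono_set (Ioi_subset_Ioi ht.le))
      (hint.mono_set (Ioi_subset_Ioi hu.le)), h t ht, h u hu, sub_zero]
  exact hderiv.unique ((hasDerivAt_const t 0).congr_of_eventuallyEq hconst)

theorem integral_Ioo_zero_rpow {q : ℝ} (hq : -1 < q) {s : ℝ} (hs : 0 < s) :
    ∫ t in Ioo 0 s, t ^ q = s ^ (q + 1) / (q + 1) := by
  rw [← integral_Ioc_eq_integral_Ioo, ← intervalIntegral.integral_of_le hs.le,
    integral_rpow (Or.inl hq), zero_rpow (by linarith), sub_zero]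

theorem integral_Ioi_zero_indicator_Iio_rpow_mul {q : ℝ} (hq : -1 < q) {s : ℝ} (hs : 0 < s)
    (c : ℝ) :
    ∫ t in Ioi 0, (Iio s).indicator (fun t => t ^ q * c) t = (q + 1)⁻¹ * s ^ (q + 1) * c := by
  rw [integral_indicator measurableSet_Iio, Measure.restrict_restrict measurableSet_Iio,
    Iio_inter_Ioi, integral_mul_const, integral_Ioo_zero_rpow hq hs, div_eq_inv_mul]

/-- Fubini for this kernel turns moments of the tail integral of `g` into moments of `g`. -/
noncomputable def tailKernel (g : ℝ → ℝ) (q : ℝ) : ℝ × ℝ → ℝ :=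
  {z | z.1 < z.2}.indicator fun z => z.1 ^ q * g z.2

section TailKernel

variable {g : ℝ → ℝ} {q : ℝ}

theorem tailKernel_eq_indicator_Iio (t s : ℝ) :
    tailKernel g q (t, s) = (Iio s).indicator (fun t => t ^ q * g s) t := by
  simp [tailKernel, indicator_apply]

theorem tailKernel_eq_indicator_Ioi (t s : ℝ) :
    tailKernel g q (t, s) = (Ioi t).indicator (fun s => t ^ q * g s) s := by
  simp [tailKernel, indicator_apply]

theorem integral_tailKernel_left {t : ℝ} (ht : 0 < t) :
    ∫ s in Ioi 0, tailKernel g q (t, s) = t ^ q * ∫ s in Ioi t, g s := by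
  simp_rw [tailKernel_eq_indicator_Ioi]
  rw [integral_indicator measurableSet_Ioi, Measure.restrict_restrict measurableSet_Ioi,
    Ioi_inter_Ioi, sup_eq_left.2 ht.le, integral_const_mul]

theorem integral_tailKernel_right (hq : -1 < q) {s : ℝ} (hs : 0 < s) :
    ∫ t in Ioi 0, tailKernel g q (t, s) = (q + 1)⁻¹ * (s ^ (q + 1) * g s) := by
  simp_rw [tailKernel_eq_indicator_Iio]
  rw [integral_Ioi_zero_indicator_Iio_rpow_mul hq hs, mul_assoc]

theorem integrable_tailKernel (hq : -1 < q)
    (hg : IntegrableOn (fun s => s ^ (q + 1) * g s) (Ioi 0)) :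
    Integrable (tailKernel g q) ((volume.restrict (Ioi 0)).prod (volume.restrict (Ioi 0))) := by
  have hgm : AEStronglyMeasurable g (volume.restrict (Ioi 0)) := by
    refine ((measurable_id.pow_const (-(q + 1))).aestronglyMeasurable.mul
      hg.aestronglyMeasurable).congr ?_
    filter_upwards [ae_restrict_mem measurableSet_Ioi] with s hs
    show s ^ (-(q + 1)) * (s ^ (q + 1) * g s) = g s
    rw [← mul_assoc, ← rpow_add hs, neg_add_cancel, rpow_zero, one_mul]
  have hF : AEStronglyMeasurable (tailKernel g q)
      ((volume.restrict (Ioi 0)).prod (volume.restrict (Ioi 0))) :=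
    ((measurable_fst.pow_const q).aestronglyMeasurable.mul hgm.comp_snd).indicator
      (measurableSet_lt measurable_fst measurable_snd)
  refine (integrable_prod_iff' hF).2 ⟨?_, ?_⟩
  · filter_upwards [ae_restrict_mem measurableSet_Ioi] with s hs
    simp only [tailKernel_eq_indicator_Iio]
    rw [integrable_indicator_iff measurableSet_Iio, IntegrableOn,
      Measure.restrict_restrict measurableSet_Iio, Iio_inter_Ioi]
    exact ((intervalIntegral.intervalIntegrable_rpow' hq).1.mono_set
      Ioo_subset_Ioc_self).mul_const _
  · refine (hg.norm.const_mul (q + 1)⁻¹).congr ?_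
    filter_upwards [ae_restrict_mem measurableSet_Ioi] with s hs
    have hnorm : ∀ t ∈ Ioi (0 : ℝ),
        ‖tailKernel g q (t, s)‖ = (Iio s).indicator (fun t => t ^ q * ‖g s‖) t := by
      intro t ht
      rw [tailKernel_eq_indicator_Iio]
      by_cases hts : t < s <;> simp [hts, abs_of_pos (rpow_pos_of_pos ht q)]
    rw [setIntegral_congr_fun measurableSet_Ioi hnorm,
      integral_Ioi_zero_indicator_Iio_rpow_mul hq hs, norm_mul,
      norm_of_nonneg (rpow_pos_of_pos hs _).le, mul_assoc]

theorem integrableOn_rpow_mul_integral_Ioi (hq : -1 < q)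
    (hg : IntegrableOn (fun s => s ^ (q + 1) * g s) (Ioi 0)) :
    IntegrableOn (fun t => t ^ q * ∫ s in Ioi t, g s) (Ioi 0) := by
  refine (integrable_tailKernel hq hg).integral_prod_left.congr ?_
  filter_upwards [ae_restrict_mem measurableSet_Ioi] with t ht
  exact integral_tailKernel_left ht

theorem integral_rpow_mul_integral_Ioi (hq : -1 < q)
    (hg : IntegrableOn (fun s => s ^ (q + 1) * g s) (Ioi 0)) :
    ∫ t in Ioi 0, t ^ q * ∫ s in Ioi t, g s = (q + 1)⁻¹ * ∫ s in Ioi 0, s ^ (q + 1) * g s := by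
  calc ∫ t in Ioi 0, t ^ q * ∫ s in Ioi t, g s
      = ∫ t in Ioi 0, ∫ s in Ioi 0, tailKernel g q (t, s) :=
        setIntegral_congr_fun measurableSet_Ioi fun t ht => (integral_tailKernel_left ht).symm
    _ = ∫ s in Ioi 0, ∫ t in Ioi 0, tailKernel g q (t, s) :=
        integral_integral_swap (integrable_tailKernel hq hg)
    _ = ∫ s in Ioi 0, (q + 1)⁻¹ * (s ^ (q + 1) * g s) :=
        setIntegral_congr_fun measurableSet_Ioi fun s hs => integral_tailKernel_right hq hs
    _ = (q + 1)⁻¹ * ∫ s in Ioi 0, s ^ (q + 1) * g s := integral_const_mul _ _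

end TailKernel

theorem eqOn_zero_of_rpow_mul_eqOn_zero {f : ℝ → ℝ} {r : ℝ}
    (h : EqOn (fun t => t ^ r * f t) 0 (Ioi 0)) : EqOn f 0 (Ioi 0) :=
  fun _ ht => (mul_eq_zero.1 (h ht)).resolve_left (rpow_pos_of_pos ht r).ne'

theorem ContinuousOn.rpow_mul {f : ℝ → ℝ} (hf : ContinuousOn f (Ioi 0)) (r : ℝ) :
    ContinuousOn (fun t => t ^ r * f t) (Ioi 0) :=
  (continuousOn_id.rpow_const fun _ ht => Or.inl (ne_of_gt ht)).mul hf

theorem eqOn_zero_of_moments_eq_zero (N : ℕ) {f : ℝ → ℝ} (hf : ContinuousOn f (Ioi 0))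
    (hsign : ¬ChangesSignAtLeast f (N + 1)) {p : Fin (N + 1) → ℝ} (hp : p.Injective)
    (hint : ∀ k, IntegrableOn (fun t => t ^ p k * f t) (Ioi 0))
    (hzero : ∀ k, ∫ t in Ioi 0, t ^ p k * f t = 0) : EqOn f 0 (Ioi 0) := by
  induction N generalizing f with
  | zero =>
    refine eqOn_zero_of_rpow_mul_eqOn_zero (r := p 0) ?_
    refine eqOn_zero_of_not_changesSignAtLeast_one (hf.rpow_mul _) (fun h => hsign ?_) (hint 0)
      (hzero 0)
    exact h.of_mul_left fun t ht => rpow_pos_of_pos ht _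
  | succ n ih =>
    obtain ⟨k₀, hk₀⟩ := Finite.exists_min p
    refine eqOn_zero_of_rpow_mul_eqOn_zero (r := p k₀) ?_
    set g : ℝ → ℝ := fun t => t ^ p k₀ * f t
    set q : Fin (n + 1) → ℝ := fun k => p (k₀.succAbove k) - p k₀ - 1
    have hq : ∀ k, -1 < q k := fun k => by
      have := lt_of_le_of_ne (hk₀ (k₀.succAbove k)) (hp.ne (Fin.succAbove_ne k₀ k).symm)
      simp only [q]; linarith
    have hq_inj : q.Injective := fun k k' h =>
      Fin.succAbove_right_injective (hp (by simpa [q] using h))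
    have hqg : ∀ k, ∀ s ∈ Ioi (0 : ℝ), s ^ (q k + 1) * g s = s ^ p (k₀.succAbove k) * f s := by
      intro k s hs
      rw [← mul_assoc, ← rpow_add hs]
      congr 2
      ring
    have hqg_int : ∀ k, IntegrableOn (fun s => s ^ (q k + 1) * g s) (Ioi 0) := fun k =>
      (hint _).congr_fun (fun s hs => (hqg k s hs).symm) measurableSet_Ioi
    have hT_cont : ContinuousOn (fun u => ∫ s in Ioi u, g s) (Ioi 0) :=
      (hint k₀).continuousOn_Ici_primitive_Ioi.mono Ioi_subset_Ici_self
    have hT_sign : ¬ChangesSignAtLeast (fun u => ∫ s in Ioi u, g s) (n + 1) := fun h =>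
      hsign <| (changesSignAtLeast_succ_of_integral_Ioi (hint k₀) (hzero k₀) h).of_mul_left
        fun t ht => rpow_pos_of_pos ht _
    have hT_zero : ∀ k, ∫ t in Ioi 0, t ^ q k * ∫ s in Ioi t, g s = 0 := fun k => by
      rw [integral_rpow_mul_integral_Ioi (hq k) (hqg_int k),
        setIntegral_congr_fun measurableSet_Ioi (hqg k), hzero, mul_zero]
    have hT : EqOn (fun u => ∫ s in Ioi u, g s) 0 (Ioi 0) :=
      ih hT_cont hT_sign hq_inj (fun k => integrableOn_rpow_mul_integral_Ioi (hq k) (hqg_int k))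
        hT_zero
    exact eqOn_zero_of_integral_Ioi_eq_zero (hf.rpow_mul _) (hint k₀) hT

/-- **Moment lemma.** If a continuous `f : [0,∞) → ℝ` changes sign at most `N-1` times in
`(0,∞)` and `∫₀^∞ t^{p_k} f(t) dt = 0` for `N` distinct real exponents `p₁,…,p_N`, then
`f ≡ 0`. -/
theorem moment_lemma
    (N : ℕ) (hN : 0 < N) (f : ℝ → ℝ)
    (hf : ContinuousOn f (Set.Ici 0))
    (hsign : ChangesSignAtMost f (N - 1))
    (p : Fin N → ℝ) (hp : Function.Injective p)
    (hint : ∀ k, IntegrableOn (fun t : ℝ => t ^ (p k) * f t) (Set.Ioi 0) volume)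
    (hzero : ∀ k, ∫ t in Set.Ioi (0 : ℝ), t ^ (p k) * f t = 0) :
    ∀ x : ℝ, 0 ≤ x → f x = 0 := by
  obtain ⟨n, rfl⟩ := Nat.exists_eq_add_one_of_ne_zero hN.ne'
  rw [Nat.add_sub_cancel] at hsign
  have hf' : ContinuousOn f (Ioi 0) := hf.mono Ioi_subset_Ici_self
  have hpos : EqOn f 0 (Ioi 0) :=
    eqOn_zero_of_moments_eq_zero n hf' (hsign.not_changesSignAtLeast hf') hp hint hzero
  exact fun x hx =>
    hpos.of_subset_closure hf continuousOn_const Ioi_subset_Ici_self (closure_Ioi 0).ge hx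
end

section
/- Let E be an ellipsoid in ℝ³ centered at the origin. Then ∫_{S²} h_E(θ) dθ = (4π / (3·vol(E))) · ∫_{S²} ρ_E(θ)⁴ dθ, where both integrals are with respect to the spherical Lebesgue measure on S². (Equivalently, the first intrinsic volume V₁(E) = (1/π)∫_{S²} h_E satisfies V₁(E) = 4 Ṽ₄(E) / V₃(E).) -/
/-!
For `E = A '' 𝔹` with `𝔹` the closed unit ball, `h_E(θ) = ‖Aᵀ θ‖` and `ρ_E(θ) = ‖A⁻¹ θ‖⁻¹`.
Integrating `g(x) = ‖A⁻¹ x‖^(-(n+1)) ‖x‖² e^(-‖x‖)` over `ℝⁿ` in polar coordinates, once directly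
and once after substituting `x = A y`, gives `∫_S ρ_E^(n+1) = |det A| ∫_S ‖A θ‖`.

It remains to see `∫_S ‖A θ‖ = ∫_S ‖Aᵀ θ‖`. With `w(x) = ‖x‖^(-n) e^(-‖x‖)`, rotation invariance
gives `∫ |⟪v, y⟫| w(y) dy = κ ‖v‖` with `0 < κ < ∞`, so `κ ∫_S ‖B θ‖ = ∫∫ |⟪B x, y⟫| w(x) w(y)`,
which is unchanged when `B` is replaced by `Bᵀ` and `x, y` are swapped. Finally
`vol E = |det A| vol 𝔹`.
-/

open MeasureTheory Real Set
open scoped RealInnerProductSpace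

noncomputable def sphereMeasure (n : ℕ) :
    Measure (Metric.sphere (0 : EuclideanSpace ℝ (Fin n)) 1) :=
  (volume : Measure (EuclideanSpace ℝ (Fin n))).toSphere

noncomputable def radial {n : ℕ} (K : Set (EuclideanSpace ℝ (Fin n)))
    (x : EuclideanSpace ℝ (Fin n)) : ℝ :=
  sSup {t : ℝ | 0 ≤ t ∧ t • x ∈ K}

/-- The support function `h_K(x) = max_{y ∈ K} ⟨x, y⟩`. -/
noncomputable def suppFn {n : ℕ} (K : Set (EuclideanSpace ℝ (Fin n)))
    (x : EuclideanSpace ℝ (Fin n)) : ℝ :=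
  sSup ((fun y => ⟪x, y⟫) '' K)

open scoped ENNReal
open Module Metric

section Polar

variable {F : Type*} [NormedAddCommGroup F] [NormedSpace ℝ F]

noncomputable def polarWeight (x : F) : ℝ := (‖x‖ ^ finrank ℝ F)⁻¹ * exp (-‖x‖)

theorem polarWeight_nonneg (x : F) : 0 ≤ polarWeight x := by
  unfold polarWeight; positivity

theorem polarWeight_pos {x : F} (hx : x ≠ 0) : 0 < polarWeight x := by
  unfold polarWeight; have := norm_pos_iff.2 hx; positivity

@[fun_prop]
theorem measurable_polarWeight [MeasurableSpace F] [OpensMeasurableSpace F] :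
    Measurable (polarWeight : F → ℝ) := by
  unfold polarWeight; fun_prop

variable [FiniteDimensional ℝ F] [MeasurableSpace F] [BorelSpace F]
  (μ : Measure F) [μ.IsAddHaarMeasure]

theorem lintegral_eq_abs_det_mul_lintegral_comp (A : F ≃ₗ[ℝ] F) (g : F → ℝ≥0∞) :
    ∫⁻ x, g x ∂μ = ENNReal.ofReal |LinearMap.det (A : F →ₗ[ℝ] F)| * ∫⁻ y, g (A y) ∂μ := by
  have hdet : LinearMap.det (A : F →ₗ[ℝ] F) ≠ 0 := A.isUnit_det'.ne_zero
  let e : F ≃ᵐ F := A.toContinuousLinearEquiv.toHomeomorph.toMeasurableEquiv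
  have hmap : Measure.map e μ = ENNReal.ofReal |(LinearMap.det (A : F →ₗ[ℝ] F))⁻¹| • μ :=
    Measure.map_linearMap_addHaar_eq_smul_addHaar μ hdet
  have hcomp : ∫⁻ y, g (A y) ∂μ = ∫⁻ x, g x ∂Measure.map e μ := (lintegral_map_equiv g e).symm
  rw [hcomp, hmap, lintegral_smul_measure, smul_eq_mul, ← mul_assoc,
    ← ENNReal.ofReal_mul (abs_nonneg _), ← abs_mul, mul_inv_cancel₀ hdet, abs_one,
    ENNReal.ofReal_one, one_mul]

variable [Nontrivial F]

theorem lintegral_eq_lintegral_toSphere_lintegral_Ioi {g : F → ℝ≥0∞} (hg : Measurable g) :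
    ∫⁻ x, g x ∂μ = ∫⁻ θ : sphere (0 : F) 1, ∫⁻ r in Ioi (0 : ℝ),
      ENNReal.ofReal (r ^ (finrank ℝ F - 1)) * g (r • (θ : F)) ∂volume ∂μ.toSphere := by
  have hg' : Measurable fun p : sphere (0 : F) 1 × Ioi (0 : ℝ) => g ((p.2 : ℝ) • (p.1 : F)) :=
    hg.comp (by fun_prop)
  calc ∫⁻ x, g x ∂μ = ∫⁻ x : ({0}ᶜ : Set F), g x ∂μ.comap Subtype.val := by
        rw [lintegral_subtype_comap (measurableSet_singleton 0).compl, restrict_compl_singleton]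
    _ = ∫⁻ x : ({0}ᶜ : Set F), g (((homeomorphUnitSphereProd F x).2 : ℝ) •
          ((homeomorphUnitSphereProd F x).1 : F)) ∂μ.comap Subtype.val := by
        refine lintegral_congr fun x => ?_
        simp [smul_inv_smul₀ (norm_ne_zero_iff.2 x.2)]
    _ = ∫⁻ p : sphere (0 : F) 1 × Ioi (0 : ℝ), g ((p.2 : ℝ) • (p.1 : F))
          ∂μ.toSphere.prod (Measure.volumeIoiPow (finrank ℝ F - 1)) :=
        (Measure.measurePreserving_homeomorphUnitSphereProd μ).lintegral_comp hg'
    _ = _ := by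
        rw [lintegral_prod _ hg'.aemeasurable]
        refine lintegral_congr fun θ => ?_
        have hgθ : Measurable fun r : Ioi (0 : ℝ) => g ((r : ℝ) • (θ : F)) :=
          hg.comp (by fun_prop)
        rw [Measure.volumeIoiPow, lintegral_withDensity_eq_lintegral_mul _ (by fun_prop) hgθ,
          ← lintegral_subtype_comap measurableSet_Ioi]
        rfl

theorem lintegral_Ioi_ofReal_exp_neg_mul {c : ℝ} (hc : 0 < c) :
    ∫⁻ r in Ioi (0 : ℝ), ENNReal.ofReal (exp (-c * r)) = ENNReal.ofReal c⁻¹ := by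
  rw [← ofReal_integral_eq_lintegral_ofReal (exp_neg_integrableOn_Ioi 0 hc)
    (Filter.Eventually.of_forall fun r => (exp_pos _).le),
    integral_exp_mul_Ioi (neg_lt_zero.2 hc)]
  simp

theorem lintegral_eq_lintegral_toSphere_of_radial_exp {g : F → ℝ≥0∞} (hg : Measurable g)
    {a : sphere (0 : F) 1 → ℝ≥0∞} {c : sphere (0 : F) 1 → ℝ}
    (hc : ∀ θ, 0 < c θ)
    (h : ∀ θ : sphere (0 : F) 1, ∀ r : ℝ, 0 < r →
      ENNReal.ofReal (r ^ (finrank ℝ F - 1)) * g (r • (θ : F)) =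
        a θ * ENNReal.ofReal (exp (-c θ * r))) :
    ∫⁻ x, g x ∂μ = ∫⁻ θ, a θ * ENNReal.ofReal (c θ)⁻¹ ∂μ.toSphere := by
  rw [lintegral_eq_lintegral_toSphere_lintegral_Ioi μ hg]
  refine lintegral_congr fun θ => ?_
  rw [setLIntegral_congr_fun measurableSet_Ioi (h θ), lintegral_const_mul _ (by fun_prop),
    lintegral_Ioi_ofReal_exp_neg_mul (hc θ)]

theorem lintegral_ofReal_mul_polarWeight {f : F → ℝ} (hf : Measurable f)
    (hhom : ∀ x, ∀ r : ℝ, 0 < r → f (r • x) = r * f x) :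
    ∫⁻ x, ENNReal.ofReal (f x * polarWeight x) ∂μ = ∫⁻ θ, ENNReal.ofReal (f θ) ∂μ.toSphere := by
  obtain ⟨k, hk⟩ : ∃ k, finrank ℝ F = k + 1 := Nat.exists_eq_succ_of_ne_zero finrank_pos.ne'
  have key := lintegral_eq_lintegral_toSphere_of_radial_exp μ
    (g := fun x => ENNReal.ofReal (f x * polarWeight x)) (by fun_prop)
    (a := fun θ => ENNReal.ofReal (f θ)) (c := fun _ => 1) (fun _ => one_pos) ?_
  · simpa using key
  intro θ r hr
  rw [← ENNReal.ofReal_mul (by positivity), ← ENNReal.ofReal_mul' (exp_pos _).le, polarWeight,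
    hhom _ _ hr, norm_smul, norm_eq_of_mem_sphere, Real.norm_of_nonneg hr.le, hk,
    Nat.add_sub_cancel]
  congr 1
  field_simp
  ring

theorem lintegral_toSphere_inv_norm_symm_pow (A : F ≃ₗ[ℝ] F) :
    ∫⁻ θ : sphere (0 : F) 1, ENNReal.ofReal (‖A.symm θ‖ ^ (finrank ℝ F + 1))⁻¹ ∂μ.toSphere =
      ENNReal.ofReal |LinearMap.det (A : F →ₗ[ℝ] F)| *
        ∫⁻ θ : sphere (0 : F) 1, ENNReal.ofReal ‖A θ‖ ∂μ.toSphere := by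
  obtain ⟨k, hk⟩ : ∃ k, finrank ℝ F = k + 1 := Nat.exists_eq_succ_of_ne_zero finrank_pos.ne'
  have hθ (θ : sphere (0 : F) 1) : (θ : F) ≠ 0 := ne_zero_of_mem_unit_sphere θ
  have hAθ (θ : sphere (0 : F) 1) : 0 < ‖A θ‖ := norm_pos_iff.2 (by simpa using hθ θ)
  have hA : Continuous A := A.toLinearMap.continuous_of_finiteDimensional
  have hA_symm : Continuous A.symm := A.symm.toLinearMap.continuous_of_finiteDimensional
  -- The factor `‖x‖ ^ 2 * exp (-‖x‖)` makes the radial profile of `g` a pure exponential,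
  -- both before and after the substitution `x = A y`.
  set g : F → ℝ≥0∞ := fun x =>
    ENNReal.ofReal ((‖A.symm x‖ ^ (finrank ℝ F + 1))⁻¹ * ‖x‖ ^ 2 * exp (-‖x‖)) with hg_def
  have hg : Measurable g := by fun_prop
  have h_sphere : ∫⁻ x, g x ∂μ =
      ∫⁻ θ : sphere (0 : F) 1, ENNReal.ofReal (‖A.symm θ‖ ^ (finrank ℝ F + 1))⁻¹ ∂μ.toSphere := by
    rw [lintegral_eq_lintegral_toSphere_of_radial_exp μ hg
      (a := fun θ => ENNReal.ofReal (‖A.symm θ‖ ^ (finrank ℝ F + 1))⁻¹) (c := fun _ => 1)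
      (fun _ => one_pos)]
    · simp
    intro θ r hr
    have hsymm : 0 < ‖A.symm θ‖ := norm_pos_iff.2 (by simpa using hθ θ)
    rw [hg_def, ← ENNReal.ofReal_mul (by positivity), ← ENNReal.ofReal_mul (by positivity),
      map_smul, norm_smul, norm_smul, norm_eq_of_mem_sphere, Real.norm_of_nonneg hr.le, hk,
      Nat.add_sub_cancel]
    congr 1
    field_simp
    ring
  have h_image :
      ∫⁻ y, g (A y) ∂μ = ∫⁻ θ : sphere (0 : F) 1, ENNReal.ofReal ‖A θ‖ ∂μ.toSphere := by
    rw [lintegral_eq_lintegral_toSphere_of_radial_exp μ (g := fun y => g (A y))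
      (hg.comp hA.measurable) (a := fun θ => ENNReal.ofReal (‖A θ‖ ^ 2)) (c := fun θ => ‖A θ‖) hAθ]
    · refine lintegral_congr fun θ => ?_
      rw [← ENNReal.ofReal_mul (by positivity)]
      congr 1
      field_simp [(hAθ θ).ne']
    intro θ r hr
    rw [hg_def, ← ENNReal.ofReal_mul (by positivity),
      ← ENNReal.ofReal_mul (by positivity), A.symm_apply_apply, map_smul, norm_smul, norm_smul,
      norm_eq_of_mem_sphere, Real.norm_of_nonneg hr.le, hk, Nat.add_sub_cancel]
    congr 1
    field_simp
    ring
  rw [← h_sphere, lintegral_eq_abs_det_mul_lintegral_comp μ A, h_image]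

end Polar

section Adjoint

variable {E : Type*} [NormedAddCommGroup E] [InnerProductSpace ℝ E] [FiniteDimensional ℝ E]
  [MeasurableSpace E] [BorelSpace E]

theorem lintegral_abs_inner_mul_polarWeight {u : E} (hu : ‖u‖ = 1) (v : E) :
    ∫⁻ y, ENNReal.ofReal (|⟪v, y⟫| * polarWeight y) =
      ENNReal.ofReal ‖v‖ * ∫⁻ y, ENNReal.ofReal (|⟪u, y⟫| * polarWeight y) := by
  rcases eq_or_ne v 0 with rfl | hv
  · simp
  set u' : E := ‖v‖⁻¹ • v
  have hu' : ‖u'‖ = 1 := norm_smul_inv_norm hv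
  let R : E ≃ₗᵢ[ℝ] E := Submodule.reflection (ℝ ∙ (u' - u))ᗮ
  have hRu' : R u' = u := Submodule.reflection_sub (hu'.trans hu.symm)
  have h_scale (y : E) : ENNReal.ofReal (|⟪v, y⟫| * polarWeight y) =
      ENNReal.ofReal ‖v‖ * ENNReal.ofReal (|⟪u', y⟫| * polarWeight y) := by
    rw [← ENNReal.ofReal_mul (norm_nonneg v), ← mul_assoc, real_inner_smul_left, abs_mul,
      abs_inv, abs_norm, mul_inv_cancel_left₀ (norm_ne_zero_iff.2 hv)]
  have h_rotate : ∫⁻ y, ENNReal.ofReal (|⟪u', y⟫| * polarWeight y) =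
      ∫⁻ y, ENNReal.ofReal (|⟪u, y⟫| * polarWeight y) := by
    calc ∫⁻ y, ENNReal.ofReal (|⟪u', y⟫| * polarWeight y)
        = ∫⁻ y, ENNReal.ofReal (|⟪u, R y⟫| * polarWeight (R y)) := by
          refine lintegral_congr fun y => ?_
          rw [← hRu', R.inner_map_map, polarWeight, polarWeight, R.norm_map]
      _ = ∫⁻ y, ENNReal.ofReal (|⟪u, y⟫| * polarWeight y) :=
          R.measurePreserving.lintegral_comp_emb R.toHomeomorph.measurableEmbedding
            fun y => ENNReal.ofReal (|⟪u, y⟫| * polarWeight y)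
  rw [lintegral_congr h_scale, lintegral_const_mul _ (by fun_prop), h_rotate]

theorem lintegral_abs_inner_mul_polarWeight_ne_zero {u : E} (hu : u ≠ 0) :
    ∫⁻ y, ENNReal.ofReal (|⟪u, y⟫| * polarWeight y) ≠ 0 := by
  have h_supp : {y : E | 0 < ⟪u, y⟫} ⊆
      Function.support fun y => ENNReal.ofReal (|⟪u, y⟫| * polarWeight y) := by
    intro y hy
    have hy0 : y ≠ 0 := by rintro rfl; simp at hy
    simpa using ⟨hy.ne', polarWeight_pos hy0⟩
  have h_open : 0 < volume {y : E | 0 < ⟪u, y⟫} :=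
    (isOpen_lt continuous_const (by fun_prop)).measure_pos volume
      ⟨u, real_inner_self_pos.2 hu⟩
  exact ((lintegral_pos_iff_support (by fun_prop)).2 (h_open.trans_le (measure_mono h_supp))).ne'

theorem lintegral_abs_inner_mul_polarWeight_mul_lintegral {u : E} (hu : ‖u‖ = 1)
    (B : E →ₗ[ℝ] E) :
    (∫⁻ y, ENNReal.ofReal (|⟪u, y⟫| * polarWeight y)) *
        ∫⁻ x, ENNReal.ofReal (‖B x‖ * polarWeight x) =
      ∫⁻ x, ∫⁻ y, ENNReal.ofReal (|⟪B x, y⟫| * (polarWeight x * polarWeight y)) := by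
  have hB : Continuous B := B.continuous_of_finiteDimensional
  rw [← lintegral_const_mul _ (by fun_prop)]
  refine lintegral_congr fun x => ?_
  have h_split (y : E) : ENNReal.ofReal (|⟪B x, y⟫| * (polarWeight x * polarWeight y)) =
      ENNReal.ofReal (polarWeight x) * ENNReal.ofReal (|⟪B x, y⟫| * polarWeight y) := by
    rw [← ENNReal.ofReal_mul (polarWeight_nonneg x), mul_left_comm]
  rw [lintegral_congr h_split, lintegral_const_mul _ (by fun_prop),
    lintegral_abs_inner_mul_polarWeight hu (B x), ENNReal.ofReal_mul (norm_nonneg _)]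
  ring

variable [Nontrivial E]

theorem lintegral_abs_inner_mul_polarWeight_ne_top (u : E) :
    ∫⁻ y, ENNReal.ofReal (|⟪u, y⟫| * polarWeight y) ≠ ⊤ := by
  have h_hom (y : E) (r : ℝ) (hr : 0 < r) : |⟪u, r • y⟫| = r * |⟪u, y⟫| := by
    rw [real_inner_smul_right, abs_mul, abs_of_pos hr]
  rw [lintegral_ofReal_mul_polarWeight volume (f := fun y => |⟪u, y⟫|) (by fun_prop) h_hom]
  have h_cont : Continuous fun θ : sphere (0 : E) 1 => |⟪u, (θ : E)⟫| := by fun_prop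
  exact (h_cont.integrable_of_hasCompactSupport
    (HasCompactSupport.of_compactSpace _)).lintegral_lt_top.ne

theorem lintegral_toSphere_norm_adjoint (B : E →ₗ[ℝ] E) :
    ∫⁻ θ : sphere (0 : E) 1, ENNReal.ofReal ‖B.adjoint θ‖ ∂volume.toSphere =
      ∫⁻ θ : sphere (0 : E) 1, ENNReal.ofReal ‖B θ‖ ∂volume.toSphere := by
  obtain ⟨u, hu⟩ := exists_norm_eq E zero_le_one
  have hB : Continuous B := B.continuous_of_finiteDimensional
  have h_sphere (C : E →ₗ[ℝ] E) : ∫⁻ x, ENNReal.ofReal (‖C x‖ * polarWeight x) =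
      ∫⁻ θ : sphere (0 : E) 1, ENNReal.ofReal ‖C θ‖ ∂volume.toSphere :=
    lintegral_ofReal_mul_polarWeight volume (f := fun x => ‖C x‖)
      C.continuous_of_finiteDimensional.norm.measurable
      fun x r hr => by rw [map_smul, norm_smul, Real.norm_of_nonneg hr.le]
  rw [← h_sphere, ← h_sphere, ← ENNReal.mul_right_inj
      (lintegral_abs_inner_mul_polarWeight_ne_zero (norm_ne_zero_iff.1 (hu ▸ one_ne_zero)))
      (lintegral_abs_inner_mul_polarWeight_ne_top u),
    lintegral_abs_inner_mul_polarWeight_mul_lintegral hu,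
    lintegral_abs_inner_mul_polarWeight_mul_lintegral hu, lintegral_lintegral_swap (by fun_prop)]
  refine lintegral_congr fun x => lintegral_congr fun y => ?_
  rw [LinearMap.adjoint_inner_left, real_inner_comm, mul_comm (polarWeight x)]

end Adjoint

theorem sSup_image_inner_closedBall {E : Type*} [NormedAddCommGroup E] [InnerProductSpace ℝ E]
    (v : E) : sSup ((fun y => ⟪v, y⟫) '' closedBall (0 : E) 1) = ‖v‖ := by
  refine IsGreatest.csSup_eq ⟨?_, ?_⟩
  · rcases eq_or_ne v 0 with rfl | hv
    · exact ⟨0, by simp⟩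
    · refine ⟨‖v‖⁻¹ • v, by simp [norm_smul, hv], ?_⟩
      change ⟪v, ‖v‖⁻¹ • v⟫ = ‖v‖
      rw [real_inner_smul_right, real_inner_self_eq_norm_sq, sq,
        inv_mul_cancel_left₀ (norm_ne_zero_iff.2 hv)]
  · rintro t ⟨y, hy, rfl⟩
    calc ⟪v, y⟫ ≤ ‖v‖ * ‖y‖ := real_inner_le_norm v y
      _ ≤ ‖v‖ := mul_le_of_le_one_right (norm_nonneg v) (by simpa using hy)

section Ellipsoid

variable {n : ℕ} (A : EuclideanSpace ℝ (Fin n) ≃ₗ[ℝ] EuclideanSpace ℝ (Fin n))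

theorem suppFn_image_closedBall (x : EuclideanSpace ℝ (Fin n)) :
    suppFn (A '' closedBall 0 1) x = ‖(A : EuclideanSpace ℝ (Fin n) →ₗ[ℝ] _).adjoint x‖ := by
  rw [suppFn, image_image, ← sSup_image_inner_closedBall]
  congr 1
  refine image_congr fun y _ => ?_
  rw [LinearMap.adjoint_inner_left]
  rfl

theorem radial_image_closedBall {x : EuclideanSpace ℝ (Fin n)} (hx : x ≠ 0) :
    radial (A '' closedBall 0 1) x = ‖A.symm x‖⁻¹ := by
  have hA : 0 < ‖A.symm x‖ := norm_pos_iff.2 (by simpa using hx)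
  have h_set : {t : ℝ | 0 ≤ t ∧ t • x ∈ A '' closedBall 0 1} = Icc 0 ‖A.symm x‖⁻¹ := by
    ext t
    simp only [mem_ofPred_eq, mem_Icc, LinearEquiv.image_eq_preimage_symm, mem_preimage,
      mem_closedBall_zero_iff, map_smul, norm_smul, Real.norm_eq_abs]
    refine and_congr_right fun ht => ?_
    rw [abs_of_nonneg ht, ← le_div_iff₀ hA, one_div]
  rw [radial, h_set, csSup_Icc (by positivity)]

theorem integral_radial_pow_eq_abs_det_mul_integral_suppFn [NeZero n] :
    ∫ θ, radial (A '' closedBall 0 1) (θ : EuclideanSpace ℝ (Fin n)) ^ (n + 1) ∂sphereMeasure n =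
      |LinearMap.det (A : EuclideanSpace ℝ (Fin n) →ₗ[ℝ] _)| *
        ∫ θ, suppFn (A '' closedBall 0 1) (θ : EuclideanSpace ℝ (Fin n)) ∂sphereMeasure n := by
  have hA_symm : Continuous A.symm := A.symm.toLinearMap.continuous_of_finiteDimensional
  have hA_adj :
      Continuous (A : EuclideanSpace ℝ (Fin n) →ₗ[ℝ] EuclideanSpace ℝ (Fin n)).adjoint :=
    LinearMap.continuous_of_finiteDimensional _
  have h_rad (θ : sphere (0 : EuclideanSpace ℝ (Fin n)) 1) :
      radial (A '' closedBall 0 1) (θ : EuclideanSpace ℝ (Fin n)) ^ (n + 1) =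
        (‖A.symm θ‖ ^ (finrank ℝ (EuclideanSpace ℝ (Fin n)) + 1))⁻¹ := by
    rw [radial_image_closedBall A (ne_zero_of_mem_unit_sphere θ), inv_pow,
      finrank_euclideanSpace_fin]
  simp_rw [h_rad, suppFn_image_closedBall]
  rw [integral_eq_lintegral_of_nonneg_ae (.of_forall fun θ => by positivity) (by fun_prop),
    integral_eq_lintegral_of_nonneg_ae (.of_forall fun θ => by positivity) (by fun_prop),
    sphereMeasure, lintegral_toSphere_inv_norm_symm_pow, lintegral_toSphere_norm_adjoint,
    ENNReal.toReal_mul, ENNReal.toReal_ofReal (abs_nonneg _)]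
  rfl

end Ellipsoid

/-- For a centered ellipsoid `E ⊆ ℝ³`:
`∫_{S²} h_E dθ = (4π / (3 vol(E))) ∫_{S²} ρ_E⁴ dθ`; equivalently `V₁(E) = 4 Ṽ₄(E)/V₃(E)`. -/
theorem first_intrinsic_volume_eq_dual_volume_four
    (A : EuclideanSpace ℝ (Fin 3) ≃ₗ[ℝ] EuclideanSpace ℝ (Fin 3))
    (E : Set (EuclideanSpace ℝ (Fin 3)))
    (hE : E = A '' Metric.closedBall (0 : EuclideanSpace ℝ (Fin 3)) 1) :
    (∫ θ : Metric.sphere (0 : EuclideanSpace ℝ (Fin 3)) 1,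
        suppFn E (θ : EuclideanSpace ℝ (Fin 3)) ∂(sphereMeasure 3)) =
      4 * Real.pi / (3 * (volume E).toReal) *
        ∫ θ : Metric.sphere (0 : EuclideanSpace ℝ (Fin 3)) 1,
          radial E (θ : EuclideanSpace ℝ (Fin 3)) ^ 4 ∂(sphereMeasure 3) := by
  subst hE
  have h_det : 0 < |LinearMap.det (A : EuclideanSpace ℝ (Fin 3) →ₗ[ℝ] _)| :=
    abs_pos.2 A.isUnit_det'.ne_zero
  have h_vol : (volume (A '' closedBall (0 : EuclideanSpace ℝ (Fin 3)) 1)).toReal =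
      |LinearMap.det (A : EuclideanSpace ℝ (Fin 3) →ₗ[ℝ] _)| * (π * 4 / 3) := by
    rw [← LinearEquiv.coe_coe, Measure.addHaar_image_linearMap,
      EuclideanSpace.volume_closedBall_fin_three]
    simp [ENNReal.toReal_ofReal h_det.le, ENNReal.toReal_ofReal (by positivity : 0 ≤ π * 4 / 3)]
  rw [integral_radial_pow_eq_abs_det_mul_integral_suppFn A, h_vol]
  field_simp
end

section
/- Let n ≥ 2, 1 ≤ k ≤ n−1, and a, b > 0. Let A be the diagonal n×n matrix diag(a, …, a, b) (with n−1 entries equal to a and last entry b), and let Q be the diagonal n×n matrix whose first k diagonal entries equal b/a and whose remaining n−k diagonal entries equal 1. Then ∫_{S^{n-1}} ⋯ ∫_{S^{n-1}} |det(Av₁, …, Av_k, v_{k+1}, …, vₙ)| dv₁ ⋯ dvₙ = a^k · ∫_{S^{n-1}} ⋯ ∫_{S^{n-1}} |det(v₁, …, v_{n−1}, Q vₙ)| dv₁ ⋯ dvₙ, where det(w₁,…,wₙ) denotes the determinant of the matrix with columns w₁,…,wₙ and each integration is with respect to the spherical Lebesgue measure on S^{n-1}. -/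
open MeasureTheory Real Set

/-!
For `j < k` write `A vⱼ = a • D vⱼ` with `D = diag(1, …, 1, b/a)`. After pulling out `a ^ k`, both
integrands have the form `|det (c ⊙ V)|`, where `V` is the matrix with columns `vⱼ` and `c` is a
fixed matrix of weights: `c` on the left and `cᵀ` on the right. So it suffices that the spherical
integral of `|det (c ⊙ V)|` is invariant under `c ↦ cᵀ`. This function is positively homogeneous
of degree one in each column, so polar coordinates turn its Gaussian integral over `(ℝⁿ)ⁿ` into the
spherical integral times a positive constant; and the Gaussian integral is invariant under the
transposition `V ↦ Vᵀ`, which turns `|det (c ⊙ V)|` into `|det (cᵀ ⊙ V)|`.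
-/

open Metric Matrix

theorem MeasureTheory.Measure.measurePreserving_of_involutive {E : Type*} [NormedAddCommGroup E]
    [NormedSpace ℝ E] [FiniteDimensional ℝ E] [MeasurableSpace E] [BorelSpace E]
    (μ : Measure E) [μ.IsAddHaarMeasure] {T : E →ₗ[ℝ] E} (hT : Function.Involutive T) :
    MeasurePreserving T μ μ := by
  have hdet : LinearMap.det T * LinearMap.det T = 1 := by
    rw [← LinearMap.det_comp, show T ∘ₗ T = LinearMap.id from LinearMap.ext hT, LinearMap.det_id]
  have habs : |(LinearMap.det T)⁻¹| = 1 := by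
    rw [abs_inv, inv_eq_one]
    nlinarith [abs_nonneg (LinearMap.det T), abs_mul_abs_self (LinearMap.det T)]
  refine ⟨T.continuous_of_finiteDimensional.measurable, ?_⟩
  rw [μ.map_linearMap_addHaar_eq_smul_addHaar (left_ne_zero_of_mul_eq_one hdet), habs,
    ENNReal.ofReal_one, one_smul]

theorem MeasureTheory.Measure.integral_volumeIoiPow (d : ℕ) (g : ℝ → ℝ) :
    ∫ r : Ioi (0 : ℝ), g r ∂volumeIoiPow d = ∫ r in Ioi 0, r ^ d * g r := by
  simp only [Measure.volumeIoiPow, ENNReal.ofReal]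
  rw [integral_withDensity_eq_integral_smul (measurable_subtype_coe.pow_const _).real_toNNReal,
    integral_subtype_comap measurableSet_Ioi fun r ↦ Real.toNNReal (r ^ d) • g r]
  refine setIntegral_congr_fun measurableSet_Ioi fun r hr ↦ ?_
  rw [NNReal.smul_def, Real.coe_toNNReal _ (pow_nonneg hr.out.le _), smul_eq_mul]

theorem MeasureTheory.Measure.integral_exp_neg_sq_mul_volumeIoiPow_pos (d : ℕ) :
    0 < ∫ r : Ioi (0 : ℝ), exp (-(r : ℝ) ^ 2) * r ∂volumeIoiPow d := by
  have hpos : ∀ r ∈ Ioi (0 : ℝ), 0 < r ^ d * (exp (-r ^ 2) * r) := fun r hr ↦ by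
    have : 0 < r := hr
    positivity
  have hint : IntegrableOn (fun r : ℝ ↦ r ^ d * (exp (-r ^ 2) * r)) (Ioi 0) := by
    have hs : (-1 : ℝ) < d + 1 := by linarith [(d.cast_nonneg : (0 : ℝ) ≤ d)]
    refine (integrableOn_rpow_mul_exp_neg_mul_sq one_pos hs).congr_fun (fun r hr ↦ ?_)
      measurableSet_Ioi
    simp only [Real.rpow_add_one (ne_of_gt hr), Real.rpow_natCast]
    ring_nf
  rw [Measure.integral_volumeIoiPow d fun r ↦ exp (-r ^ 2) * r,
    setIntegral_pos_iff_support_of_nonneg_ae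
      (ae_restrict_of_forall_mem measurableSet_Ioi fun r hr ↦ (hpos r hr).le) hint,
    inter_eq_right.2 fun r hr ↦ Function.mem_support.2 (hpos r hr).ne']
  simp

section Polar

variable {E : Type*} [NormedAddCommGroup E] [NormedSpace ℝ E] [FiniteDimensional ℝ E]
  [MeasurableSpace E] [BorelSpace E] [Nontrivial E] (μ : Measure E) [μ.IsAddHaarMeasure]

theorem MeasureTheory.Measure.measurePreserving_smul_sphere :
    MeasurePreserving (fun p : sphere (0 : E) 1 × Ioi (0 : ℝ) ↦ (p.2 : ℝ) • (p.1 : E))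
      (μ.toSphere.prod (.volumeIoiPow (Module.finrank ℝ E - 1))) μ := by
  have h := (measurePreserving_subtype_coe (μa := μ) (measurableSet_singleton (0 : E)).compl).comp
    (μ.measurePreserving_homeomorphUnitSphereProd.symm
      (homeomorphUnitSphereProd E).toMeasurableEquiv)
  rwa [restrict_compl_singleton] at h

theorem MeasureTheory.Measure.integral_gaussian_mul_eq_integral_sphere_mul
    {ι : Type*} [Fintype ι] {f : (ι → E) → ℝ}
    (hf_meas : AEStronglyMeasurable f (Measure.pi fun _ ↦ μ))
    (hf : ∀ (r : ι → ℝ) (X : ι → E), (∀ j, 0 < r j) → f (fun j ↦ r j • X j) = (∏ j, r j) * f X) :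
    ∫ X, (∏ j, exp (-‖X j‖ ^ 2)) * f X ∂Measure.pi (fun _ ↦ μ) =
      (∫ v : ι → sphere (0 : E) 1, f (fun j ↦ v j) ∂Measure.pi fun _ ↦ μ.toSphere) *
        (∫ r : Ioi (0 : ℝ), exp (-(r : ℝ) ^ 2) * r
          ∂.volumeIoiPow (Module.finrank ℝ E - 1)) ^ Fintype.card ι := by
  set ρ := Measure.volumeIoiPow (Module.finrank ℝ E - 1)
  have hpolar : MeasurePreserving
      (fun (p : ι → sphere (0 : E) 1 × Ioi (0 : ℝ)) j ↦ ((p j).2 : ℝ) • ((p j).1 : E))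
      (Measure.pi fun _ ↦ μ.toSphere.prod ρ) (Measure.pi fun _ ↦ μ) :=
    measurePreserving_pi _ _ fun _ ↦ μ.measurePreserving_smul_sphere
  have hsplit := measurePreserving_arrowProdEquivProdArrow (sphere (0 : E) 1) (Ioi (0 : ℝ)) ι
    (fun _ ↦ μ.toSphere) (fun _ ↦ ρ)
  have hweight : Continuous fun X : ι → E ↦ ∏ j, exp (-‖X j‖ ^ 2) := by fun_prop
  have hpolar_integrand (p : ι → sphere (0 : E) 1 × Ioi (0 : ℝ)) :
      (∏ j, exp (-‖((p j).2 : ℝ) • ((p j).1 : E)‖ ^ 2)) *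
          f (fun j ↦ ((p j).2 : ℝ) • ((p j).1 : E)) =
        f (fun j ↦ (p j).1) * ∏ j, (exp (-((p j).2 : ℝ) ^ 2) * (p j).2) := by
    rw [hf _ _ fun j ↦ (p j).2.2, Finset.prod_mul_distrib]
    simp only [norm_smul, norm_eq_of_mem_sphere, mul_one, Real.norm_of_nonneg (p _).2.2.out.le]
    ring
  rw [← hpolar.map_eq, integral_map hpolar.aemeasurable
    (hpolar.map_eq ▸ hweight.aestronglyMeasurable.mul hf_meas)]
  simp only [hpolar_integrand]
  rw [← hsplit.symm.map_eq, integral_map_equiv]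
  exact (integral_prod_mul (fun v : ι → sphere (0 : E) 1 ↦ f (fun j ↦ v j))
    fun r : ι → Ioi (0 : ℝ) ↦ ∏ j, exp (-(r j : ℝ) ^ 2) * r j).trans
    (congrArg _ (integral_fintype_prod_eq_pow fun r : Ioi (0 : ℝ) ↦ exp (-(r : ℝ) ^ 2) * r))

end Polar

namespace EuclideanSpace

variable {n : ℕ}

def transposeCols (n : ℕ) :
    (Fin n → EuclideanSpace ℝ (Fin n)) →ₗ[ℝ] (Fin n → EuclideanSpace ℝ (Fin n)) where
  toFun X j := WithLp.toLp 2 fun i ↦ X i j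
  map_add' _ _ := rfl
  map_smul' _ _ := rfl

theorem transposeCols_involutive : Function.Involutive (transposeCols n) := fun _ ↦ rfl

theorem of_transposeCols (X : Fin n → EuclideanSpace ℝ (Fin n)) :
    (of fun i j ↦ transposeCols n X j i) = (of fun i j ↦ X j i)ᵀ := rfl

theorem prod_exp_neg_norm_sq_transposeCols (X : Fin n → EuclideanSpace ℝ (Fin n)) :
    ∏ j, exp (-‖transposeCols n X j‖ ^ 2) = ∏ j, exp (-‖X j‖ ^ 2) := by
  simp only [← exp_sum, Finset.sum_neg_distrib, EuclideanSpace.norm_sq_eq, Real.norm_eq_abs,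
    sq_abs]
  rw [Finset.sum_comm]
  rfl

theorem abs_det_hadamard_smul_cols (c : Matrix (Fin n) (Fin n) ℝ) (r : Fin n → ℝ)
    (X : Fin n → EuclideanSpace ℝ (Fin n)) (hr : ∀ j, 0 < r j) :
    |det (c ⊙ of fun i j ↦ (r j • X j) i)| = (∏ j, r j) * |det (c ⊙ of fun i j ↦ X j i)| := by
  have hcols : (c ⊙ of fun i j ↦ (r j • X j) i) =
      of fun i j ↦ r j * (c ⊙ of fun i j ↦ X j i) i j := by
    ext i j
    simp only [hadamard_apply, of_apply, PiLp.smul_apply, smul_eq_mul]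
    ring
  rw [hcols, det_mul_row, abs_mul, abs_of_pos (Finset.prod_pos fun j _ ↦ hr j)]

theorem continuous_abs_det_hadamard_cols (c : Matrix (Fin n) (Fin n) ℝ) :
    Continuous fun X : Fin n → EuclideanSpace ℝ (Fin n) ↦ |det (c ⊙ of fun i j ↦ X j i)| :=
  (continuous_matrix fun i j ↦ by simp only [hadamard_apply, of_apply]; fun_prop).matrix_det.abs

theorem integral_gaussian_abs_det_hadamard_transpose (c : Matrix (Fin n) (Fin n) ℝ) :
    ∫ X : Fin n → EuclideanSpace ℝ (Fin n),
        (∏ j, exp (-‖X j‖ ^ 2)) * |det (cᵀ ⊙ of fun i j ↦ X j i)| =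
      ∫ X : Fin n → EuclideanSpace ℝ (Fin n),
        (∏ j, exp (-‖X j‖ ^ 2)) * |det (c ⊙ of fun i j ↦ X j i)| := by
  have hT := (volume : Measure (Fin n → EuclideanSpace ℝ (Fin n))).measurePreserving_of_involutive
    transposeCols_involutive
  have hcont : Continuous fun X : Fin n → EuclideanSpace ℝ (Fin n) ↦
      (∏ j, exp (-‖X j‖ ^ 2)) * |det (c ⊙ of fun i j ↦ X j i)| :=
    (by fun_prop : Continuous fun X : Fin n → EuclideanSpace ℝ (Fin n) ↦ ∏ j, exp (-‖X j‖ ^ 2)).mul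
      (continuous_abs_det_hadamard_cols c)
  have hswap (M : Matrix (Fin n) (Fin n) ℝ) : c ⊙ Mᵀ = (cᵀ ⊙ M)ᵀ := by
    rw [transpose_hadamard, transpose_transpose]
  conv_rhs => rw [← hT.map_eq, integral_map hT.aemeasurable hcont.aestronglyMeasurable]
  simp only [prod_exp_neg_norm_sq_transposeCols, of_transposeCols, hswap, det_transpose]

theorem integral_sphere_abs_det_hadamard_transpose (c : Matrix (Fin n) (Fin n) ℝ) :
    ∫ v : Fin n → sphere (0 : EuclideanSpace ℝ (Fin n)) 1,
        |det (cᵀ ⊙ of fun i j ↦ (v j : EuclideanSpace ℝ (Fin n)) i)|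
        ∂(Measure.pi fun _ ↦ sphereMeasure n) =
      ∫ v : Fin n → sphere (0 : EuclideanSpace ℝ (Fin n)) 1,
        |det (c ⊙ of fun i j ↦ (v j : EuclideanSpace ℝ (Fin n)) i)|
        ∂(Measure.pi fun _ ↦ sphereMeasure n) := by
  rcases n.eq_zero_or_pos with rfl | hn
  · rw [Subsingleton.elim cᵀ c]
  have : NeZero n := ⟨hn.ne'⟩
  have polar (d : Matrix (Fin n) (Fin n) ℝ) :=
    volume.integral_gaussian_mul_eq_integral_sphere_mul
      (continuous_abs_det_hadamard_cols d).aestronglyMeasurable (abs_det_hadamard_smul_cols d)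
  have hradial := Measure.integral_exp_neg_sq_mul_volumeIoiPow_pos
    (Module.finrank ℝ (EuclideanSpace ℝ (Fin n)) - 1)
  refine mul_right_cancel₀ (pow_ne_zero (Fintype.card (Fin n)) hradial.ne') ?_
  rw [sphereMeasure, ← polar, ← polar]
  exact integral_gaussian_abs_det_hadamard_transpose c

end EuclideanSpace

theorem Fin.prod_ite_val_lt_eq_pow {M : Type*} [CommMonoid M] {n k : ℕ} (hk : k ≤ n) (a : M) :
    ∏ j : Fin n, (if (j : ℕ) < k then a else 1) = a ^ k := by
  rw [Finset.prod_ite, Finset.prod_const_one, mul_one, Finset.prod_const, Fin.card_filter_val_lt,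
    min_eq_right hk]

theorem det_integral_diagonal_reduction_general
    (n : ℕ) (k : ℕ) (hk2 : k ≤ n - 1)
    (a b : ℝ) (ha : 0 < a) :
    (∫ v : Fin n → Metric.sphere (0 : EuclideanSpace ℝ (Fin n)) 1,
        |Matrix.det (Matrix.of fun i j : Fin n =>
          (if (j : ℕ) < k then (if (i : ℕ) = n - 1 then b else a) else 1) *
            ((v j : EuclideanSpace ℝ (Fin n)) i))|
        ∂(Measure.pi fun _ : Fin n => sphereMeasure n)) =
      a ^ k *
        ∫ v : Fin n → Metric.sphere (0 : EuclideanSpace ℝ (Fin n)) 1,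
          |Matrix.det (Matrix.of fun i j : Fin n =>
            (if (j : ℕ) = n - 1 then (if (i : ℕ) < k then b / a else 1) else 1) *
              ((v j : EuclideanSpace ℝ (Fin n)) i))|
          ∂(Measure.pi fun _ : Fin n => sphereMeasure n) := by
  let c : Matrix (Fin n) (Fin n) ℝ :=
    of fun i j ↦ if (i : ℕ) = n - 1 ∧ (j : ℕ) < k then b / a else 1
  have hleft (v : Fin n → sphere (0 : EuclideanSpace ℝ (Fin n)) 1) :
      |det (of fun i j : Fin n ↦ (if (j : ℕ) < k then (if (i : ℕ) = n - 1 then b else a) else 1) *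
          (v j : EuclideanSpace ℝ (Fin n)) i)| =
        a ^ k * |det (c ⊙ of fun i j ↦ (v j : EuclideanSpace ℝ (Fin n)) i)| := by
    have hcols : (of fun i j : Fin n ↦
        (if (j : ℕ) < k then (if (i : ℕ) = n - 1 then b else a) else 1) *
          (v j : EuclideanSpace ℝ (Fin n)) i) =
        of fun i j : Fin n ↦ (if (j : ℕ) < k then a else 1) *
          (c ⊙ of fun i j ↦ (v j : EuclideanSpace ℝ (Fin n)) i) i j := by
      ext i j
      simp only [of_apply, hadamard_apply, c]
      split_ifs <;> simp_all
      field_simp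
    rw [hcols, det_mul_row, Fin.prod_ite_val_lt_eq_pow (by omega), abs_mul,
      abs_of_pos (pow_pos ha k)]
  have hright (v : Fin n → sphere (0 : EuclideanSpace ℝ (Fin n)) 1) :
      (of fun i j : Fin n ↦ (if (j : ℕ) = n - 1 then (if (i : ℕ) < k then b / a else 1) else 1) *
        (v j : EuclideanSpace ℝ (Fin n)) i) =
        cᵀ ⊙ of fun i j ↦ (v j : EuclideanSpace ℝ (Fin n)) i := by
    ext i j
    simp only [of_apply, hadamard_apply, transpose_apply, c, ite_and]
  simp only [hleft, hright]
  rw [integral_const_mul, EuclideanSpace.integral_sphere_abs_det_hadamard_transpose]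

/-- With `A = diag(a,…,a,b)` applied to the first `k` columns, the iterated spherical integral
of `|det(Av₁,…,Av_k,v_{k+1},…,vₙ)|` equals `a^k` times the iterated spherical integral of
`|det(v₁,…,v_{n-1},Qvₙ)|`, where `Q = diag(b/a,…,b/a,1,…,1)` with `k` entries `b/a`. -/
theorem det_integral_diagonal_reduction
    (n : ℕ) (hn : 2 ≤ n) (k : ℕ) (hk1 : 1 ≤ k) (hk2 : k ≤ n - 1)
    (a b : ℝ) (ha : 0 < a) (hb : 0 < b) :
    (∫ v : Fin n → Metric.sphere (0 : EuclideanSpace ℝ (Fin n)) 1,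
        |Matrix.det (Matrix.of fun i j : Fin n =>
          (if (j : ℕ) < k then (if (i : ℕ) = n - 1 then b else a) else 1) *
            ((v j : EuclideanSpace ℝ (Fin n)) i))|
        ∂(Measure.pi fun _ : Fin n => sphereMeasure n)) =
      a ^ k *
        ∫ v : Fin n → Metric.sphere (0 : EuclideanSpace ℝ (Fin n)) 1,
          |Matrix.det (Matrix.of fun i j : Fin n =>
            (if (j : ℕ) = n - 1 then (if (i : ℕ) < k then b / a else 1) else 1) *
              ((v j : EuclideanSpace ℝ (Fin n)) i))|
          ∂(Measure.pi fun _ : Fin n => sphereMeasure n) :=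
  det_integral_diagonal_reduction_general n k hk2 a b ha
end

section
/- Let n ≥ 2, 1 ≤ k ≤ n−1 with 2k ≠ n, and let a, b > 0 with a ≠ b. Then the function F(u) = (1 + a^{2k−2n}u²)^{−k/2}(1 + a^{2k}u²)^{−(n−k)/2} − (1 + b^{2k−2n}u²)^{−k/2}(1 + b^{2k}u²)^{−(n−k)/2} is not identically zero and has at most one zero in the interval (0, ∞). -/
open Set

open Real Filter


lemma sinh_ratio_lt {α β y : ℝ} (hα : 0 < α) (hαβ : α < β) (hy : 0 < y) :
    β * Real.sinh (α*y) < α * Real.sinh (β*y) := by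
  set g : ℝ → ℝ := fun t => α * Real.sinh (β*t) - β * Real.sinh (α*t) with hg
  have hd : ∀ t : ℝ, HasDerivAt g (α * (Real.cosh (β*t) * β) - β * (Real.cosh (α*t) * α)) t := by
    intro t
    have h1 : HasDerivAt (fun t : ℝ => Real.sinh (β*t)) (Real.cosh (β*t) * β) t :=
      (Real.hasDerivAt_sinh (β*t)).comp t (by simpa using (hasDerivAt_id t).const_mul β)
    have h2 : HasDerivAt (fun t : ℝ => Real.sinh (α*t)) (Real.cosh (α*t) * α) t :=
      (Real.hasDerivAt_sinh (α*t)).comp t (by simpa using (hasDerivAt_id t).const_mul α)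
    exact (h1.const_mul α).sub (h2.const_mul β)
  have hmono : StrictMonoOn g (Ici (0:ℝ)) := by
    apply strictMonoOn_of_deriv_pos (convex_Ici 0)
    · exact fun t _ => ((hd t).continuousAt).continuousWithinAt
    · intro t ht
      rw [interior_Ici] at ht
      have ht' : 0 < t := ht
      rw [(hd t).deriv]
      have hc : Real.cosh (α*t) < Real.cosh (β*t) := by
        rw [Real.cosh_lt_cosh]
        rw [abs_of_pos (mul_pos hα ht'), abs_of_pos (mul_pos (hα.trans hαβ) ht')]
        exact mul_lt_mul_of_pos_right hαβ ht'
      have := mul_pos (mul_pos hα (hα.trans hαβ)) (sub_pos.mpr hc)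
      nlinarith
  have := hmono (le_refl (0:ℝ)) (le_of_lt hy) hy
  simp only [hg, mul_zero, Real.sinh_zero, sub_zero, mul_zero] at this
  linarith

lemma sinh_ratio_ne {α β y : ℝ} (hα : 0 < α) (hβ : 0 < β) (hαβ : α ≠ β) (hy : y ≠ 0) :
    β * Real.sinh (α*y) ≠ α * Real.sinh (β*y) := by
  have key : ∀ z : ℝ, 0 < z → β * Real.sinh (α*z) ≠ α * Real.sinh (β*z) := by
    intro z hz
    rcases lt_or_gt_of_ne hαβ with h | h
    · exact ne_of_lt (sinh_ratio_lt hα h hz)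
    · exact (ne_of_lt (sinh_ratio_lt hβ h hz)).symm
  rcases lt_or_gt_of_ne hy with h | h
  · have := key (-y) (by linarith)
    intro hcon
    apply this
    rw [mul_neg, mul_neg, Real.sinh_neg, Real.sinh_neg]
    linarith
  · exact key y h


lemma quad_roots {c0 c1 c2 x y z : ℝ} (hxy : x ≠ y) (hxz : x ≠ z) (hyz : y ≠ z)
    (hx : c0 + c1*x + c2*x^2 = 0) (hy : c0 + c1*y + c2*y^2 = 0)
    (hz : c0 + c1*z + c2*z^2 = 0) : c0 = 0 ∧ c1 = 0 ∧ c2 = 0 := by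
  have h1 : (x - y) * (c1 + c2*(x+y)) = 0 := by linear_combination hx - hy
  have h2 : (y - z) * (c1 + c2*(y+z)) = 0 := by linear_combination hy - hz
  have h1' : c1 + c2*(x+y) = 0 :=
    (mul_eq_zero.mp h1).resolve_left (sub_ne_zero.mpr hxy)
  have h2' : c1 + c2*(y+z) = 0 :=
    (mul_eq_zero.mp h2).resolve_left (sub_ne_zero.mpr hyz)
  have h3 : (x - z) * c2 = 0 := by linear_combination h1' - h2'
  have hc2 : c2 = 0 := (mul_eq_zero.mp h3).resolve_left (sub_ne_zero.mpr hxz)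
  have hc1 : c1 = 0 := by linear_combination h1' - (x+y) * hc2
  exact ⟨by linear_combination hx - x*hc1 - x^2*hc2, hc1, hc2⟩

lemma key_lemma (κ μ p q r s : ℝ) (hκ : 0 < κ) (hμ : 0 < μ)
    (hp : 0 < p) (hq : 0 < q) (hr : 0 < r) (hs : 0 < s)
    (hlim : κ * (Real.log p - Real.log r) + μ * (Real.log q - Real.log s) = 0)
    (hc : ¬(κ*(p-r)+μ*(q-s) = 0 ∧ κ*q*s*(p-r)+μ*p*r*(q-s) = 0)) :
    (∃ t : ℝ, 0 < t ∧ κ * Real.log (1+p*t) + μ * Real.log (1+q*t)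
        - κ * Real.log (1+r*t) - μ * Real.log (1+s*t) ≠ 0) ∧
    ∀ t1 t2 : ℝ, 0 < t1 → t1 < t2 →
      κ * Real.log (1+p*t1) + μ * Real.log (1+q*t1)
        - κ * Real.log (1+r*t1) - μ * Real.log (1+s*t1) = 0 →
      κ * Real.log (1+p*t2) + μ * Real.log (1+q*t2)
        - κ * Real.log (1+r*t2) - μ * Real.log (1+s*t2) = 0 → False := by
  set c0 : ℝ := κ*(p-r)+μ*(q-s) with hc0def
  set c1 : ℝ := κ*(p*q + p*s - q*r - r*s) + μ*(p*q + q*r - p*s - r*s) with hc1def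
  set c2 : ℝ := κ*q*s*(p-r)+μ*p*r*(q-s) with hc2def
  set Q : ℝ → ℝ := fun t => c0 + c1*t + c2*t^2 with hQdef
  set hfun : ℝ → ℝ := fun t => κ * Real.log (1+p*t) + μ * Real.log (1+q*t)
      - κ * Real.log (1+r*t) - μ * Real.log (1+s*t) with hhdef
  have pos : ∀ (c t : ℝ), 0 < c → 0 ≤ t → 0 < 1 + c*t := fun c t hc ht => by positivity
  have hDpos : ∀ t : ℝ, 0 ≤ t → 0 < (1+p*t)*((1+q*t)*((1+r*t)*(1+s*t))) := fun t ht => by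
    have := pos p t hp ht; have := pos q t hq ht; have := pos r t hr ht
    have := pos s t hs ht; positivity
  have hD : ∀ t : ℝ, 0 ≤ t →
      HasDerivAt hfun (Q t / ((1+p*t)*((1+q*t)*((1+r*t)*(1+s*t))))) t := by
    intro t ht
    have mk : ∀ c : ℝ, 0 < c → HasDerivAt (fun y : ℝ => Real.log (1+c*y)) (c/(1+c*t)) t := by
      intro c hcpos
      have l1 : HasDerivAt (fun y : ℝ => 1 + c*y) c t := by
        simpa using ((hasDerivAt_id t).const_mul c).const_add 1
      exact l1.log (ne_of_gt (pos c t hcpos ht))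
    have hsum : HasDerivAt hfun
        (κ * (p/(1+p*t)) + μ * (q/(1+q*t)) - κ * (r/(1+r*t)) - μ * (s/(1+s*t))) t :=
      ((((mk p hp).const_mul κ).add ((mk q hq).const_mul μ)).sub
        ((mk r hr).const_mul κ)).sub ((mk s hs).const_mul μ)
    have heq : κ * (p/(1+p*t)) + μ * (q/(1+q*t)) - κ * (r/(1+r*t)) - μ * (s/(1+s*t))
        = Q t / ((1+p*t)*((1+q*t)*((1+r*t)*(1+s*t)))) := by
      have h1 := ne_of_gt (pos p t hp ht); have h2 := ne_of_gt (pos q t hq ht)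
      have h3 := ne_of_gt (pos r t hr ht); have h4 := ne_of_gt (pos s t hs ht)
      rw [hQdef, hc0def, hc1def, hc2def]
      field_simp
      ring
    rwa [heq] at hsum
  have hcont : ∀ t : ℝ, 0 ≤ t → ContinuousAt hfun t := fun t ht => (hD t ht).continuousAt
  have hQcont : Continuous Q := by fun_prop
  have h0 : hfun 0 = 0 := by simp [hhdef]
  have hT : Tendsto hfun atTop (nhds 0) := by
    have aux : ∀ c : ℝ, 0 < c →
        Tendsto (fun t : ℝ => Real.log (t⁻¹ + c)) atTop (nhds (Real.log c)) := by
      intro c hcpos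
      have h1 : Tendsto (fun t : ℝ => t⁻¹ + c) atTop (nhds (0 + c)) :=
        tendsto_inv_atTop_zero.add tendsto_const_nhds
      rw [zero_add] at h1
      exact ((Real.continuousAt_log (ne_of_gt hcpos)).tendsto).comp h1
    have ev : ∀ c : ℝ, 0 < c → ∀ᶠ t : ℝ in atTop,
        Real.log (1 + c*t) = Real.log t + Real.log (t⁻¹ + c) := by
      intro c hcpos
      filter_upwards [eventually_gt_atTop (0:ℝ)] with t ht
      have : 1 + c*t = t * (t⁻¹ + c) := by field_simp
      rw [this, Real.log_mul (ne_of_gt ht) (by positivity)]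
    have main : Tendsto (fun t : ℝ =>
        κ * (Real.log (t⁻¹+p) - Real.log (t⁻¹+r)) + μ * (Real.log (t⁻¹+q) - Real.log (t⁻¹+s)))
        atTop (nhds (κ * (Real.log p - Real.log r) + μ * (Real.log q - Real.log s))) :=
      (((aux p hp).sub (aux r hr)).const_mul κ).add (((aux q hq).sub (aux s hs)).const_mul μ)
    rw [hlim] at main
    refine main.congr' ?_
    filter_upwards [ev p hp, ev q hq, ev r hr, ev s hs] with t e1 e2 e3 e4
    show _ = hfun t
    rw [hhdef]; simp only []
    rw [e1, e2, e3, e4]; ring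
  have QofRolle : ∀ u1 u2 : ℝ, u1 < u2 → 0 ≤ u1 → hfun u1 = hfun u2 →
      ∃ x ∈ Ioo u1 u2, Q x = 0 := by
    intro u1 u2 h12 hu1 hval
    obtain ⟨x, hx, hx'⟩ := exists_hasDerivAt_eq_zero h12
      (fun x hx => (hcont x (le_trans hu1 hx.1)).continuousWithinAt) hval
      (fun x hx => hD x (le_of_lt (lt_of_le_of_lt hu1 hx.1)))
    refine ⟨x, hx, ?_⟩
    have hden := hDpos x (le_of_lt (lt_of_le_of_lt hu1 hx.1))
    exact (div_eq_zero_iff.mp hx').resolve_right (ne_of_gt hden)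
  have hQne : ¬ (c0 = 0 ∧ c1 = 0 ∧ c2 = 0) := by
    rintro ⟨h0', h1', h2'⟩; exact hc ⟨h0', h2'⟩
  have threeRoots : ∀ x y z : ℝ, x < y → y < z → Q x = 0 → Q y = 0 → Q z = 0 → False := by
    intro x y z hxy hyz hQx hQy hQz
    exact hQne (quad_roots (ne_of_lt hxy) (ne_of_lt (hxy.trans hyz)) (ne_of_lt hyz) hQx hQy hQz)
  constructor
  · by_contra hcon
    push_neg at hcon
    have hQz : ∀ t : ℝ, 0 < t → Q t = 0 := by
      intro t ht
      have hev : hfun =ᶠ[nhds t] (fun _ => (0:ℝ)) := by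
        filter_upwards [Ioi_mem_nhds ht] with x hx
        exact hcon x hx
      have hzero : HasDerivAt hfun 0 t := (hasDerivAt_const t (0:ℝ)).congr_of_eventuallyEq hev
      have heqv := hzero.unique (hD t (le_of_lt ht))
      have hden := hDpos t (le_of_lt ht)
      exact (div_eq_zero_iff.mp heqv.symm).resolve_right (ne_of_gt hden)
    exact threeRoots 1 2 3 (by norm_num) (by norm_num) (hQz 1 one_pos) (hQz 2 (by norm_num))
      (hQz 3 (by norm_num))
  · intro t1 t2 ht1 h12 hv1' hv2'
    have hv1 : hfun t1 = 0 := hv1'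
    have hv2 : hfun t2 = 0 := hv2'
    obtain ⟨x1, hx1, hQ1⟩ := QofRolle 0 t1 ht1 le_rfl (by rw [h0, hv1])
    obtain ⟨x2, hx2, hQ2⟩ := QofRolle t1 t2 h12 (le_of_lt ht1) (by rw [hv1, hv2])
    by_cases h3 : ∃ t3, t2 < t3 ∧ Q t3 = 0
    · obtain ⟨t3, ht3, hQ3⟩ := h3
      exact threeRoots x1 x2 t3 (hx1.2.trans hx2.1) (hx2.2.trans ht3) hQ1 hQ2 hQ3
    push_neg at h3
    have hIVT : ∀ u v : ℝ, t2 < u → t2 < v → Q u < 0 → 0 < Q v → False := by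
      intro u v hu hv hQu hQv
      have hsub := intermediate_value_uIcc (a := u) (b := v) hQcont.continuousOn
      have h0m : (0:ℝ) ∈ Set.uIcc (Q u) (Q v) :=
        Set.mem_uIcc.mpr (Or.inl ⟨le_of_lt hQu, le_of_lt hQv⟩)
      obtain ⟨z, hz, hQz⟩ := hsub h0m
      have hzgt : t2 < z := by
        rcases Set.mem_uIcc.mp hz with ⟨ha1, ha2⟩ | ⟨ha1, ha2⟩ <;> linarith
      exact h3 z hzgt hQz
    have hsign : (∀ t, t2 < t → 0 < Q t) ∨ (∀ t, t2 < t → Q t < 0) := by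
      rcases lt_or_gt_of_ne (h3 (t2+1) (by linarith)) with hneg | hpos
      · right
        intro t ht
        rcases lt_trichotomy (Q t) 0 with h' | h' | h'
        · exact h'
        · exact absurd h' (h3 t ht)
        · exact absurd (hIVT (t2+1) t (by linarith) ht hneg h') not_false
      · left
        intro t ht
        rcases lt_trichotomy (Q t) 0 with h' | h' | h'
        · exact absurd (hIVT t (t2+1) ht (by linarith) h' hpos) not_false
        · exact absurd h' (h3 t ht)
        · exact h'
    have ht2pos : 0 < t2 := ht1.trans h12
    have hderiv_eq : ∀ x, t2 < x → deriv hfun x = Q x / ((1+p*x)*((1+q*x)*((1+r*x)*(1+s*x)))) :=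
      fun x hx => (hD x (le_of_lt (ht2pos.trans hx))).deriv
    rcases hsign with hposQ | hnegQ
    · have hmono : StrictMonoOn hfun (Ici t2) := by
        apply strictMonoOn_of_deriv_pos (convex_Ici t2)
        · exact fun x hx => (hcont x (le_trans (le_of_lt ht2pos) hx)).continuousWithinAt
        · intro x hx
          rw [interior_Ici] at hx
          rw [hderiv_eq x hx]
          exact div_pos (hposQ x hx) (hDpos x (le_of_lt (ht2pos.trans hx)))
      have hε : 0 < hfun (t2+1) := by
        have := hmono self_mem_Ici (by simp : t2+1 ∈ Ici t2) (by linarith)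
        rwa [hv2] at this
      have hle : hfun (t2+1) ≤ 0 := by
        apply ge_of_tendsto hT
        filter_upwards [eventually_ge_atTop (t2+1)] with x hx
        rcases eq_or_lt_of_le hx with h' | h'
        · rw [h']
        · exact le_of_lt (hmono (by simp : t2+1 ∈ Ici t2)
            (by simp only [mem_Ici]; linarith : x ∈ Ici t2) h')
      linarith
    · have hmono : StrictAntiOn hfun (Ici t2) := by
        apply strictAntiOn_of_deriv_neg (convex_Ici t2)
        · exact fun x hx => (hcont x (le_trans (le_of_lt ht2pos) hx)).continuousWithinAt
        · intro x hx
          rw [interior_Ici] at hx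
          rw [hderiv_eq x hx]
          exact div_neg_of_neg_of_pos (hnegQ x hx) (hDpos x (le_of_lt (ht2pos.trans hx)))
      have hε : hfun (t2+1) < 0 := by
        have := hmono self_mem_Ici (by simp : t2+1 ∈ Ici t2) (by linarith)
        rwa [hv2] at this
      have hle : 0 ≤ hfun (t2+1) := by
        apply le_of_tendsto hT
        filter_upwards [eventually_ge_atTop (t2+1)] with x hx
        rcases eq_or_lt_of_le hx with h' | h'
        · rw [h']
        · exact le_of_lt (hmono (by simp : t2+1 ∈ Ici t2)
            (by simp only [mem_Ici]; linarith : x ∈ Ici t2) h')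
      linarith


/-- For `2k ≠ n` and `a ≠ b`, the difference
`F(u) = (1+a^{2k-2n}u²)^{-k/2}(1+a^{2k}u²)^{-(n-k)/2} − (1+b^{2k-2n}u²)^{-k/2}(1+b^{2k}u²)^{-(n-k)/2}`
is not identically zero and has at most one zero in `(0,∞)`. -/
theorem revolution_difference_at_most_one_zero
    (n : ℕ) (hn : 2 ≤ n) (k : ℕ) (hk1 : 1 ≤ k) (hk2 : k ≤ n - 1) (hk3 : 2 * k ≠ n)
    (a b : ℝ) (ha : 0 < a) (hb : 0 < b) (hab : a ≠ b)
    (F : ℝ → ℝ)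
    (hF : ∀ u : ℝ, F u =
      (1 + a ^ (2 * (k : ℝ) - 2 * (n : ℝ)) * u ^ 2) ^ (-(k : ℝ) / 2) *
          (1 + a ^ (2 * (k : ℝ)) * u ^ 2) ^ (-((n : ℝ) - (k : ℝ)) / 2) -
        (1 + b ^ (2 * (k : ℝ) - 2 * (n : ℝ)) * u ^ 2) ^ (-(k : ℝ) / 2) *
          (1 + b ^ (2 * (k : ℝ)) * u ^ 2) ^ (-((n : ℝ) - (k : ℝ)) / 2)) :
    (∃ u : ℝ, 0 < u ∧ F u ≠ 0) ∧ {u : ℝ | 0 < u ∧ F u = 0}.Subsingleton := by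
  have hknat : k < n := by omega
  have hKpos : (0:ℝ) < (k:ℝ) := by exact_mod_cast hk1
  have hkn : (k:ℝ) < (n:ℝ) := by exact_mod_cast hknat
  have hμpos : (0:ℝ) < (n:ℝ) - (k:ℝ) := by linarith
  have hnpos : (0:ℝ) < (n:ℝ) := by positivity
  have hKne : (k:ℝ) ≠ (n:ℝ) - (k:ℝ) := by
    intro h
    apply hk3
    have h2 : ((2*k : ℕ) : ℝ) = (n:ℝ) := by push_cast; linarith
    exact_mod_cast h2
  set p : ℝ := a ^ (2 * (k : ℝ) - 2 * (n : ℝ)) with hpdef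
  set q : ℝ := a ^ (2 * (k : ℝ)) with hqdef
  set r : ℝ := b ^ (2 * (k : ℝ) - 2 * (n : ℝ)) with hrdef
  set s : ℝ := b ^ (2 * (k : ℝ)) with hsdef
  have hp : 0 < p := Real.rpow_pos_of_pos ha _
  have hq : 0 < q := Real.rpow_pos_of_pos ha _
  have hr : 0 < r := Real.rpow_pos_of_pos hb _
  have hs : 0 < s := Real.rpow_pos_of_pos hb _
  have hlim : (k:ℝ) * (Real.log p - Real.log r) + ((n:ℝ)-(k:ℝ)) * (Real.log q - Real.log s) = 0 := by
    rw [hpdef, hqdef, hrdef, hsdef, Real.log_rpow ha, Real.log_rpow hb,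
      Real.log_rpow ha, Real.log_rpow hb]
    ring
  -- the coefficient condition
  have hc : ¬((k:ℝ)*(p-r)+((n:ℝ)-(k:ℝ))*(q-s) = 0 ∧
      (k:ℝ)*q*s*(p-r)+((n:ℝ)-(k:ℝ))*p*r*(q-s) = 0) := by
    rintro ⟨H0, H2⟩
    have hqs : q ≠ s := by
      intro h
      apply hab
      have hlq : (2*(k:ℝ)) * Real.log a = (2*(k:ℝ)) * Real.log b := by
        rw [← Real.log_rpow ha, ← Real.log_rpow hb, ← hqdef, ← hsdef, h]
      have : Real.log a = Real.log b := by
        have h2k : (2*(k:ℝ)) ≠ 0 := by positivity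
        exact mul_left_cancel₀ h2k hlq
      rw [← Real.exp_log ha, ← Real.exp_log hb, this]
    have h5 : ((n:ℝ)-(k:ℝ))*(q-s)*(p*r-q*s) = 0 := by linear_combination H2 - q*s*H0
    have h6 : p*r - q*s = 0 := by
      have := mul_eq_zero.mp h5
      rcases this with h' | h'
      · exact absurd (mul_eq_zero.mp h') (by
          rintro (h'' | h'')
          · exact absurd h'' (ne_of_gt hμpos)
          · exact hqs (by linarith [sub_eq_zero.mp h'']))
      · exact h'
    -- p*r = (a*b)^e, q*s = (a*b)^f  ⇒ a*b = 1
    have hab1 : a * b = 1 := by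
      have hpr : p * r = (a*b) ^ (2 * (k : ℝ) - 2 * (n : ℝ)) := by
        rw [hpdef, hrdef, Real.mul_rpow (le_of_lt ha) (le_of_lt hb)]
      have hqs' : q * s = (a*b) ^ (2 * (k : ℝ)) := by
        rw [hqdef, hsdef, Real.mul_rpow (le_of_lt ha) (le_of_lt hb)]
      have habpos : 0 < a * b := mul_pos ha hb
      have heq : (a*b) ^ (2 * (k : ℝ) - 2 * (n : ℝ)) = (a*b) ^ (2 * (k : ℝ)) := by
        rw [← hpr, ← hqs']; linarith [sub_eq_zero.mp h6]
      have hlog : (2 * (k : ℝ) - 2 * (n : ℝ)) * Real.log (a*b)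
          = (2 * (k : ℝ)) * Real.log (a*b) := by
        rw [← Real.log_rpow habpos, ← Real.log_rpow habpos, heq]
      have hfac : (2 * (n:ℝ)) * Real.log (a*b) = 0 := by linarith
      have hlog0 : Real.log (a*b) = 0 := by
        rcases mul_eq_zero.mp hfac with h' | h'
        · exact absurd h' (by positivity)
        · exact h'
      rw [← Real.exp_log habpos, hlog0, Real.exp_zero]
    have hbInv : b = a⁻¹ := eq_inv_of_mul_eq_one_left (by linarith [mul_comm a b] : b * a = 1)
    have ha1 : a ≠ 1 := by
      intro h
      apply hab
      rw [h, hbInv, h, inv_one]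
    have hla : Real.log a ≠ 0 := by
      intro h
      exact ha1 (by rw [← Real.exp_log ha, h, Real.exp_zero])
    -- rewrite p,q,r,s as exponentials
    have hXdef : q = Real.exp (2*(k:ℝ) * Real.log a) := by
      rw [hqdef, Real.rpow_def_of_pos ha]; congr 1; ring
    have hPdef : p = Real.exp (-(2*((n:ℝ)-(k:ℝ)) * Real.log a)) := by
      rw [hpdef, Real.rpow_def_of_pos ha]; congr 1; ring
    have hRdef : r = Real.exp (2*((n:ℝ)-(k:ℝ)) * Real.log a) := by
      rw [hrdef, hbInv, Real.rpow_def_of_pos (by positivity), Real.log_inv]; congr 1; ring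
    have hSdef : s = Real.exp (-(2*(k:ℝ) * Real.log a)) := by
      rw [hsdef, hbInv, Real.rpow_def_of_pos (by positivity), Real.log_inv]; congr 1; ring
    apply sinh_ratio_ne (α := 2*(k:ℝ)) (β := 2*((n:ℝ)-(k:ℝ))) (y := Real.log a)
      (by positivity) (by positivity) (by intro h; exact hKne (by linarith)) hla
    rw [Real.sinh_eq, Real.sinh_eq, Real.exp_neg, Real.exp_neg]
    rw [hPdef, hXdef, hRdef, hSdef, Real.exp_neg, Real.exp_neg] at H0
    linear_combination H0
  -- translation between F and the log function
  have hiff : ∀ u : ℝ, (F u = 0 ↔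
      (k:ℝ) * Real.log (1 + p * u^2) + ((n:ℝ)-(k:ℝ)) * Real.log (1 + q * u^2)
        - (k:ℝ) * Real.log (1 + r * u^2) - ((n:ℝ)-(k:ℝ)) * Real.log (1 + s * u^2) = 0) := by
    intro u
    rw [hF u]
    have h1 : 0 < 1 + p * u^2 := by positivity
    have h2 : 0 < 1 + q * u^2 := by positivity
    have h3 : 0 < 1 + r * u^2 := by positivity
    have h4 : 0 < 1 + s * u^2 := by positivity
    have hA : 0 < (1 + p * u^2) ^ (-(k : ℝ) / 2) * (1 + q * u^2) ^ (-((n : ℝ) - (k : ℝ)) / 2) :=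
      mul_pos (Real.rpow_pos_of_pos h1 _) (Real.rpow_pos_of_pos h2 _)
    have hB : 0 < (1 + r * u^2) ^ (-(k : ℝ) / 2) * (1 + s * u^2) ^ (-((n : ℝ) - (k : ℝ)) / 2) :=
      mul_pos (Real.rpow_pos_of_pos h3 _) (Real.rpow_pos_of_pos h4 _)
    rw [sub_eq_zero]
    constructor
    · intro hAB
      have hlog := congrArg Real.log hAB
      rw [Real.log_mul (ne_of_gt (Real.rpow_pos_of_pos h1 _)) (ne_of_gt (Real.rpow_pos_of_pos h2 _)),
        Real.log_mul (ne_of_gt (Real.rpow_pos_of_pos h3 _)) (ne_of_gt (Real.rpow_pos_of_pos h4 _)),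
        Real.log_rpow h1, Real.log_rpow h2, Real.log_rpow h3, Real.log_rpow h4] at hlog
      linear_combination (-2 : ℝ) * hlog
    · intro hsum
      apply Real.log_injOn_pos (mem_Ioi.mpr hA) (mem_Ioi.mpr hB)
      rw [Real.log_mul (ne_of_gt (Real.rpow_pos_of_pos h1 _)) (ne_of_gt (Real.rpow_pos_of_pos h2 _)),
        Real.log_mul (ne_of_gt (Real.rpow_pos_of_pos h3 _)) (ne_of_gt (Real.rpow_pos_of_pos h4 _)),
        Real.log_rpow h1, Real.log_rpow h2, Real.log_rpow h3, Real.log_rpow h4]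
      linear_combination (-(1:ℝ)/2) * hsum
  obtain ⟨⟨t0, ht0, hne0⟩, huniq⟩ :=
    key_lemma (k:ℝ) ((n:ℝ)-(k:ℝ)) p q r s hKpos hμpos hp hq hr hs hlim hc
  constructor
  · refine ⟨Real.sqrt t0, Real.sqrt_pos.mpr ht0, ?_⟩
    intro hFz
    apply hne0
    have := (hiff (Real.sqrt t0)).mp hFz
    rwa [Real.sq_sqrt (le_of_lt ht0)] at this
  · intro u hu v hv
    simp only [mem_setOf_eq] at hu hv
    obtain ⟨hu1, hu2⟩ := hu
    obtain ⟨hv1, hv2⟩ := hv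
    by_contra hne'
    rcases lt_or_gt_of_ne hne' with hlt | hlt
    · exact huniq (u^2) (v^2) (by positivity) (by nlinarith) ((hiff u).mp hu2) ((hiff v).mp hv2)
    · exact huniq (v^2) (u^2) (by positivity) (by nlinarith) ((hiff v).mp hv2) ((hiff u).mp hu2)
end

section
/- Let n be a positive integer and define Φ(a) = ∫₀^∞ u^{−2} ( 1 − ((1 + a^{−n}u²)(1 + aⁿu²))^{−n/4} ) du for a > 0. Then Φ(1/a) = Φ(a) for every a > 0, Φ is strictly increasing on [1, ∞), and consequently, if Φ(a) = Φ(b) for a, b > 0, then b = a or b = 1/a. -/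
open MeasureTheory Real Set

/-!
Since `(1 + a⁻ⁿu²)(1 + aⁿu²) = 1 + s u² + u⁴` with `s = aⁿ + a⁻ⁿ`, `Φ(a)` depends on `a` only
through `s`, which is invariant under `a ↦ 1/a` and strictly increasing on `[1, ∞)`. For fixed
`u > 0` the integrand is strictly increasing in `s` because the exponent `-n/4` is negative, and it
is integrable, being at most `u⁻²` and, by `1 - x^q ≤ -q (x - 1)`, at most `(n/4)(s + u²)`.
-/

/-- `Φ(a) = ∫₀^∞ u⁻² (1 − ((1+a⁻ⁿu²)(1+aⁿu²))^{-n/4}) du`; up to a positive constant, the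
`(n/2)`-th intrinsic volume (for even `n`) of the ellipsoid of revolution with semiaxes
`(a,…,a,a^{1-n})`. -/
noncomputable def Phi (n : ℕ) (a : ℝ) : ℝ :=
  ∫ u in Set.Ioi (0 : ℝ), (u ^ 2)⁻¹ *
    (1 - ((1 + a ^ (-(n : ℝ)) * u ^ 2) * (1 + a ^ (n : ℝ) * u ^ 2)) ^ (-(n : ℝ) / 4))

theorem MeasureTheory.setIntegral_lt_setIntegral_of_forall_lt {X : Type*} [MeasurableSpace X]
    {μ : Measure X} {s : Set X} {f g : X → ℝ} (hs : MeasurableSet s) (hμs : μ s ≠ 0)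
    (hf : IntegrableOn f s μ) (hg : IntegrableOn g s μ) (hfg : ∀ x ∈ s, f x < g x) :
    ∫ x in s, f x ∂μ < ∫ x in s, g x ∂μ := by
  rw [← sub_pos, ← integral_sub hg hf, setIntegral_pos_iff_support_of_nonneg_ae
    (ae_restrict_of_forall_mem hs fun x hx => (sub_pos.2 (hfg x hx)).le) (hg.sub hf)]
  have : (Function.support fun x => g x - f x) ∩ s = s :=
    inter_eq_right.2 fun x hx => (sub_pos.2 (hfg x hx)).ne'
  rwa [this, pos_iff_ne_zero]

theorem one_sub_rpow_le_of_nonpos {x q : ℝ} (hx : 1 ≤ x) (hq : q ≤ 0) :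
    1 - x ^ q ≤ -q * (x - 1) := by
  have hx0 : 0 < x := one_pos.trans_le hx
  have hexp : q * log x + 1 ≤ x ^ q := by
    rw [rpow_def_of_pos hx0, mul_comm]; exact add_one_le_exp _
  nlinarith [log_le_sub_one_of_pos hx0]

theorem add_inv_strictMonoOn : StrictMonoOn (fun x : ℝ => x + x⁻¹) (Ici 1) := by
  intro x (hx : 1 ≤ x) y (hy : 1 ≤ y) hxy
  have hxy1 : 1 < x * y := by nlinarith
  have : x⁻¹ - y⁻¹ = (y - x) / (x * y) := by field_simp
  have : (y - x) / (x * y) < y - x := div_lt_self (by linarith) hxy1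
  simp only
  linarith

theorem rpow_add_rpow_neg_strictMonoOn {p : ℝ} (hp : 0 < p) :
    StrictMonoOn (fun a : ℝ => a ^ p + a ^ (-p)) (Ici 1) := by
  intro a (ha : 1 ≤ a) b (hb : 1 ≤ b) hab
  simp only [rpow_neg (zero_le_one.trans ha), rpow_neg (zero_le_one.trans hb)]
  exact add_inv_strictMonoOn (one_le_rpow ha hp.le) (one_le_rpow hb hp.le)
    (rpow_lt_rpow (zero_le_one.trans ha) hab hp)

theorem eq_or_eq_one_div_of_apply_eq {f : ℝ → ℝ} (hsymm : ∀ a, 0 < a → f (1 / a) = f a)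
    (hmono : StrictMonoOn f (Ici 1)) {a b : ℝ} (ha : 0 < a) (hb : 0 < b) (hab : f a = f b) :
    b = a ∨ b = 1 / a := by
  have one_le_one_div {c : ℝ} (hc : 0 < c) (h : c ≤ 1) : 1 / c ∈ Ici 1 := by
    rw [mem_Ici, le_div_iff₀ hc, one_mul]; exact h
  rcases le_total 1 a with ha1 | ha1 <;> rcases le_total 1 b with hb1 | hb1
  · exact Or.inl (hmono.injOn hb1 ha1 hab.symm)
  · refine Or.inr ?_
    rw [← hmono.injOn (one_le_one_div hb hb1) ha1 (by rw [hsymm b hb, hab]), one_div_one_div]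
  · exact Or.inr (hmono.injOn hb1 (one_le_one_div ha ha1) (by rw [hsymm a ha, hab]))
  · have h := hmono.injOn (one_le_one_div hb hb1) (one_le_one_div ha ha1)
      (by rw [hsymm a ha, hsymm b hb, hab])
    rw [one_div, one_div, inv_inj] at h
    exact Or.inl h

noncomputable def phiIntegrand (q s u : ℝ) : ℝ :=
  (u ^ 2)⁻¹ * (1 - (1 + s * u ^ 2 + u ^ 4) ^ q)

noncomputable def phiIntegral (q s : ℝ) : ℝ :=
  ∫ u in Ioi 0, phiIntegrand q s u

theorem Phi_eq_phiIntegral (n : ℕ) {a : ℝ} (ha : 0 < a) :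
    Phi n a = phiIntegral (-(n : ℝ) / 4) (a ^ (n : ℝ) + a ^ (-(n : ℝ))) := by
  have h : a ^ (-(n : ℝ)) * a ^ (n : ℝ) = 1 := by
    rw [← rpow_add ha]; simp
  refine integral_congr_ae (ae_of_all _ fun u => ?_)
  simp only [phiIntegrand]
  congr 3
  linear_combination (u ^ 2 * u ^ 2) * h

theorem one_le_one_add_mul_sq_add_pow_four {s : ℝ} (hs : 0 ≤ s) (u : ℝ) :
    1 ≤ 1 + s * u ^ 2 + u ^ 4 := by
  nlinarith [mul_nonneg hs (sq_nonneg u), pow_two_nonneg (u ^ 2)]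

theorem phiIntegrand_nonneg {q s : ℝ} (hq : q ≤ 0) (hs : 0 ≤ s) (u : ℝ) :
    0 ≤ phiIntegrand q s u :=
  mul_nonneg (by positivity) (sub_nonneg.2
    (rpow_le_one_of_one_le_of_nonpos (one_le_one_add_mul_sq_add_pow_four hs u) hq))

theorem phiIntegrand_le {q s u : ℝ} (hq : q ≤ 0) (hs : 0 ≤ s) (hu : 0 < u) :
    phiIntegrand q s u ≤ 2 * (1 - q * (s + 1)) * (1 + u ^ 2)⁻¹ := by
  have hx := one_le_one_add_mul_sq_add_pow_four hs u
  have hy0 : 0 ≤ 1 - (1 + s * u ^ 2 + u ^ 4) ^ q :=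
    sub_nonneg.2 (rpow_le_one_of_one_le_of_nonpos hx hq)
  have hy1 : 1 - (1 + s * u ^ 2 + u ^ 4) ^ q ≤ 1 := by
    linarith [rpow_pos_of_pos (one_pos.trans_le hx) q]
  have hy_lin : 1 - (1 + s * u ^ 2 + u ^ 4) ^ q ≤ -q * u ^ 2 * (s + u ^ 2) := by
    linarith [one_sub_rpow_le_of_nonpos hx hq]
  rw [phiIntegrand, inv_mul_eq_div, ← div_eq_mul_inv,
    div_le_div_iff₀ (by positivity) (by positivity)]
  generalize 1 - (1 + s * u ^ 2 + u ^ 4) ^ q = y at hy0 hy1 hy_lin ⊢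
  have hv : 0 < u ^ 2 := by positivity
  generalize u ^ 2 = v at hv hy_lin ⊢
  have hqs : 0 ≤ -q * (s + 1) := mul_nonneg (neg_nonneg.2 hq) (by linarith)
  rcases le_total v 1 with hv1 | hv1
  · nlinarith [mul_nonneg hy0 (sub_nonneg.2 hv1),
      mul_nonneg (mul_nonneg (neg_nonneg.2 hq) hv.le) (sub_nonneg.2 hv1)]
  · nlinarith [mul_nonneg hqs hv.le]

theorem integrableOn_phiIntegrand {q s : ℝ} (hq : q ≤ 0) (hs : 0 ≤ s) :
    IntegrableOn (phiIntegrand q s) (Ioi 0) := by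
  refine ((integrable_inv_one_add_sq.const_mul (2 * (1 - q * (s + 1)))).restrict).mono' ?_ ?_
  · refine ContinuousOn.aestronglyMeasurable ?_ measurableSet_Ioi
    refine ((continuousOn_id.pow 2).inv₀ fun u (hu : 0 < u) => pow_ne_zero 2 hu.ne').mul ?_
    exact continuousOn_const.sub ((by fun_prop : Continuous _).continuousOn.rpow_const
      fun u _ => Or.inl (one_pos.trans_le (one_le_one_add_mul_sq_add_pow_four hs u)).ne')
  · refine ae_restrict_of_forall_mem measurableSet_Ioi fun u (hu : 0 < u) => ?_
    rw [norm_of_nonneg (phiIntegrand_nonneg hq hs u)]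
    exact phiIntegrand_le hq hs hu

theorem phiIntegral_strictMonoOn {q : ℝ} (hq : q < 0) : StrictMonoOn (phiIntegral q) (Ici 0) := by
  intro s (hs : 0 ≤ s) t (ht : 0 ≤ t) hst
  refine setIntegral_lt_setIntegral_of_forall_lt measurableSet_Ioi (by simp)
    (integrableOn_phiIntegrand hq.le hs) (integrableOn_phiIntegrand hq.le ht)
    fun u (hu : 0 < u) => ?_
  have hbase : 1 + s * u ^ 2 + u ^ 4 < 1 + t * u ^ 2 + u ^ 4 := by nlinarith [pow_pos hu 2]
  have := rpow_lt_rpow_of_neg (one_pos.trans_le (one_le_one_add_mul_sq_add_pow_four hs u)) hbase hq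
  unfold phiIntegrand
  gcongr

/-- `Φ(1/a) = Φ(a)`, `Φ` is strictly increasing on `[1,∞)`, and hence `Φ(a) = Φ(b)` implies
`b = a` or `b = 1/a`. -/
theorem Phi_symm_strictMono
    (n : ℕ) (hn : 0 < n) :
    (∀ a : ℝ, 0 < a → Phi n (1 / a) = Phi n a) ∧
      StrictMonoOn (Phi n) (Set.Ici (1 : ℝ)) ∧
      ∀ a b : ℝ, 0 < a → 0 < b → Phi n a = Phi n b → b = a ∨ b = 1 / a := by
  have hn' : (0 : ℝ) < n := Nat.cast_pos.2 hn
  have hsymm : ∀ a : ℝ, 0 < a → Phi n (1 / a) = Phi n a := by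
    intro a ha
    rw [Phi_eq_phiIntegral n (one_div_pos.2 ha), Phi_eq_phiIntegral n ha, one_div,
      inv_rpow ha.le, inv_rpow ha.le, rpow_neg ha.le, inv_inv, add_comm]
  have hmono : StrictMonoOn (Phi n) (Ici 1) := by
    intro a (ha : 1 ≤ a) b (hb : 1 ≤ b) hab
    have ha0 := one_pos.trans_le ha
    have hb0 := one_pos.trans_le hb
    rw [Phi_eq_phiIntegral n ha0, Phi_eq_phiIntegral n hb0]
    exact phiIntegral_strictMonoOn (by linarith) (mem_Ici.2 (by positivity))
      (mem_Ici.2 (by positivity)) (rpow_add_rpow_neg_strictMonoOn hn' ha hb hab)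
  exact ⟨hsymm, hmono, fun a b ha hb => eq_or_eq_one_div_of_apply_eq hsymm hmono ha hb⟩
end

section
/- Let n ≥ 3 and 1 ≤ k ≤ n−1. For t > 0 define J_k(t) = t^k · ∫_{S^{n-1}} ( t^{−2n}(θ₁² + ⋯ + θ_k²) + θ_{k+1}² + ⋯ + θₙ² )^{1/2} dθ (spherical Lebesgue measure). Then J_k is not injective on (0,∞): there exist a, b > 0 with a ≠ b and J_k(a) = J_k(b). (Consequently there exist two non-congruent ellipsoids of revolution in ℝⁿ with equal volumes Vₙ and equal k-th intrinsic volumes V_k.) -/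
open MeasureTheory Real Set

/-- `J_m(t) = t^m ∫_{S^{n-1}} ( t^{-2n}(θ₁²+⋯+θ_m²) + θ_{m+1}²+⋯+θₙ² )^{1/2} dθ`;
up to a constant, the `m`-th intrinsic volume of the ellipsoid of revolution with
semiaxes `(t,…,t,t^{1-n})`. -/
noncomputable def Jfun (n m : ℕ) (t : ℝ) : ℝ :=
  t ^ m * ∫ θ : Metric.sphere (0 : EuclideanSpace ℝ (Fin n)) 1,
    Real.sqrt (∑ j : Fin n, (if (j : ℕ) < m then (t ^ (2 * n))⁻¹ else 1) *
      ((θ : EuclideanSpace ℝ (Fin n)) j) ^ 2) ∂(sphereMeasure n)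

/-! Bounding the integrand below by a single weighted coordinate `θ_j` gives
`J_k(t) ≥ c t^{k-n}` (for `j < k`) and `J_k(t) ≥ c t^k` (for `j ≥ k`), with `c = ∫ |θ_j| > 0`.
As `1 ≤ k < n`, the continuous function `J_k` tends to `∞` at both ends of `(0, ∞)`, so by the
intermediate value theorem it takes the value `J_k(1) + 1` on both sides of `1`. -/

open Filter Topology

local notation "𝕊" n => Metric.sphere (0 : EuclideanSpace ℝ (Fin n)) 1

theorem Continuous.integrable_of_compactSpace {X : Type*} [TopologicalSpace X] [CompactSpace X]
    [MeasurableSpace X] [OpensMeasurableSpace X] {μ : Measure X} [IsFiniteMeasureOnCompacts μ]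
    {f : X → ℝ} (hf : Continuous f) : Integrable f μ :=
  hf.integrable_of_hasCompactSupport (.of_compactSpace f)

theorem sqrt_mul_abs_le_sqrt_sum {ι : Type*} (s : Finset ι) {w : ι → ℝ} (hw : ∀ i ∈ s, 0 ≤ w i)
    (x : ι → ℝ) {j : ι} (hj : j ∈ s) : √(w j) * |x j| ≤ √(∑ i ∈ s, w i * x i ^ 2) := by
  rw [← sqrt_sq_eq_abs, ← sqrt_mul (hw j hj)]
  exact sqrt_le_sqrt (Finset.single_le_sum (fun i hi => mul_nonneg (hw i hi) (sq_nonneg _)) hj)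

theorem ContinuousOn.exists_lt_eq_of_tendsto_atTop {f : ℝ → ℝ} {c : ℝ}
    (hf : ContinuousOn f (Ioi c)) (hc : Tendsto f (𝓝[>] c) atTop)
    (htop : Tendsto f atTop atTop) : ∃ a b, c < a ∧ a < b ∧ f a = f b := by
  have hc1 : c < c + 1 := lt_add_one c
  obtain ⟨a, hfa, hca, ha1⟩ := ((hc.eventually_ge_atTop (f (c + 1) + 1)).and
    (Ioo_mem_nhdsGT hc1)).exists
  obtain ⟨b, hfb, hb1⟩ := ((htop.eventually_ge_atTop (f (c + 1) + 1)).and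
    (eventually_gt_atTop (c + 1))).exists
  obtain ⟨x, hx, hfx⟩ := intermediate_value_Icc' ha1.le
    (hf.mono fun t ht => hca.trans_le ht.1) ⟨(lt_add_one _).le, hfa⟩
  obtain ⟨y, hy, hfy⟩ := intermediate_value_Icc hb1.le
    (hf.mono fun t ht => hc1.trans_le ht.1) ⟨(lt_add_one _).le, hfb⟩
  have hx1 : x ≠ c + 1 := by rintro rfl; linarith
  exact ⟨x, y, hca.trans_le hx.1, (hx.2.lt_of_ne hx1).trans_le hy.1, hfx.trans hfy.symm⟩

instance (n : ℕ) : IsFiniteMeasure (sphereMeasure n) := by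
  unfold sphereMeasure; infer_instance

instance (n : ℕ) : (sphereMeasure n).IsOpenPosMeasure := by
  unfold sphereMeasure; infer_instance

theorem integral_abs_coord_pos {n : ℕ} (j : Fin n) :
    0 < ∫ θ : 𝕊 n, |(θ : EuclideanSpace ℝ (Fin n)) j| ∂(sphereMeasure n) := by
  have he : EuclideanSpace.single j (1 : ℝ) ∈ (𝕊 n) := by simp
  exact integral_pos_of_integrable_nonneg_nonzero (x := ⟨_, he⟩) (by fun_prop)
    (by fun_prop : Continuous _).integrable_of_compactSpace (fun _ => abs_nonneg _) (by simp)

noncomputable def weightedIntegral (n m : ℕ) (s : ℝ) : ℝ :=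
  ∫ θ : 𝕊 n, √(∑ j : Fin n, (if (j : ℕ) < m then s else 1) *
      ((θ : EuclideanSpace ℝ (Fin n)) j) ^ 2) ∂(sphereMeasure n)

theorem Jfun_eq (n m : ℕ) (t : ℝ) :
    Jfun n m t = t ^ m * weightedIntegral n m (t ^ (2 * n))⁻¹ := rfl

theorem continuous_weightedIntegral (n m : ℕ) : Continuous (weightedIntegral n m) := by
  have hw (j : Fin n) : Continuous fun s : ℝ => if (j : ℕ) < m then s else 1 := by
    split_ifs <;> fun_prop
  have h := continuous_parametric_integral_of_continuous (μ := sphereMeasure n)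
    (f := fun s (θ : 𝕊 n) => √(∑ j : Fin n, (if (j : ℕ) < m then s else 1) *
      ((θ : EuclideanSpace ℝ (Fin n)) j) ^ 2)) (by fun_prop) isCompact_univ
  rw [Measure.restrict_univ] at h
  exact h

theorem sqrt_weight_mul_integral_abs_le_weightedIntegral {n m : ℕ} {s : ℝ} (hs : 0 ≤ s)
    (j : Fin n) :
    √(if (j : ℕ) < m then s else 1) *
        ∫ θ : 𝕊 n, |(θ : EuclideanSpace ℝ (Fin n)) j| ∂(sphereMeasure n) ≤
      weightedIntegral n m s := by
  rw [← integral_const_mul]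
  refine integral_mono ?_ ?_ fun θ => sqrt_mul_abs_le_sqrt_sum _
    (w := fun i : Fin n => if (i : ℕ) < m then s else 1) (fun i _ => by split_ifs <;> positivity)
    _ (Finset.mem_univ j)
  · exact (by fun_prop : Continuous _).integrable_of_compactSpace
  · have hw (j : Fin n) : Continuous fun _ : 𝕊 n => if (j : ℕ) < m then s else 1 := by
      fun_prop
    exact (by fun_prop : Continuous _).integrable_of_compactSpace

theorem continuousOn_Jfun (n m : ℕ) : ContinuousOn (Jfun n m) (Ioi 0) :=
  (continuousOn_pow m).mul ((continuous_weightedIntegral n m).comp_continuousOn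
    ((continuousOn_pow _).inv₀ fun _ ht => pow_ne_zero _ (ne_of_gt ht)))

theorem integral_abs_coord_mul_inv_pow_le_Jfun {n m : ℕ} (hmn : m ≤ n) {t : ℝ} (ht : 0 < t)
    {j : Fin n} (hj : (j : ℕ) < m) :
    (∫ θ : 𝕊 n, |(θ : EuclideanSpace ℝ (Fin n)) j| ∂(sphereMeasure n)) * t⁻¹ ^ (n - m) ≤
      Jfun n m t := by
  have h := sqrt_weight_mul_integral_abs_le_weightedIntegral (m := m) (s := (t ^ (2 * n))⁻¹)
    (by positivity) j
  have hsqrt : √((t ^ (2 * n))⁻¹) = (t ^ n)⁻¹ := by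
    rw [sqrt_inv, pow_mul', sqrt_sq (by positivity)]
  rw [if_pos hj, hsqrt] at h
  calc _ = t ^ m * ((t ^ n)⁻¹ *
        ∫ θ : 𝕊 n, |(θ : EuclideanSpace ℝ (Fin n)) j| ∂(sphereMeasure n)) := by
        rw [inv_pow, pow_sub₀ t ht.ne' hmn, mul_inv, inv_inv]; ring
    _ ≤ Jfun n m t := by rw [Jfun_eq]; gcongr

theorem integral_abs_coord_mul_pow_le_Jfun {n m : ℕ} {t : ℝ} (ht : 0 < t) {j : Fin n}
    (hj : m ≤ (j : ℕ)) :
    (∫ θ : 𝕊 n, |(θ : EuclideanSpace ℝ (Fin n)) j| ∂(sphereMeasure n)) * t ^ m ≤ Jfun n m t := by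
  have h := sqrt_weight_mul_integral_abs_le_weightedIntegral (m := m) (s := (t ^ (2 * n))⁻¹)
    (by positivity) j
  rw [if_neg hj.not_gt, sqrt_one, one_mul] at h
  rw [Jfun_eq, mul_comm]
  gcongr

theorem tendsto_Jfun_nhdsGT_zero {n m : ℕ} (hm : 0 < m) (hmn : m < n) :
    Tendsto (Jfun n m) (𝓝[>] 0) atTop := by
  have hlim := ((tendsto_pow_atTop (Nat.sub_ne_zero_of_lt hmn)).comp
    tendsto_inv_nhdsGT_zero).const_mul_atTop (integral_abs_coord_pos ⟨0, hm.trans hmn⟩)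
  refine tendsto_atTop_mono' _ ?_ hlim
  filter_upwards [self_mem_nhdsWithin] with t ht
    using integral_abs_coord_mul_inv_pow_le_Jfun hmn.le ht hm

theorem tendsto_Jfun_atTop {n m : ℕ} (hm : 0 < m) (hmn : m < n) :
    Tendsto (Jfun n m) atTop atTop := by
  have hlim := (tendsto_pow_atTop hm.ne').const_mul_atTop
    (integral_abs_coord_pos (⟨n - 1, by omega⟩ : Fin n))
  refine tendsto_atTop_mono' _ ?_ hlim
  filter_upwards [eventually_gt_atTop 0] with t ht
    using integral_abs_coord_mul_pow_le_Jfun ht (by simp only; omega)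

theorem Jfun_not_injective_general
    (n : ℕ) (k : ℕ) (hk1 : 1 ≤ k) (hk2 : k ≤ n - 1) :
    ∃ a b : ℝ, 0 < a ∧ 0 < b ∧ a ≠ b ∧ Jfun n k a = Jfun n k b := by
  have hkn : k < n := by omega
  obtain ⟨a, b, ha, hab, hJ⟩ := (continuousOn_Jfun n k).exists_lt_eq_of_tendsto_atTop
    (tendsto_Jfun_nhdsGT_zero hk1 hkn) (tendsto_Jfun_atTop hk1 hkn)
  exact ⟨a, b, ha, ha.trans hab, hab.ne, hJ⟩

/-- `J_k` is not injective on `(0,∞)`: the volume `Vₙ` together with a single intrinsic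
volume `V_k` does not determine an ellipsoid of revolution uniquely. -/
theorem Jfun_not_injective
    (n : ℕ) (hn : 3 ≤ n) (k : ℕ) (hk1 : 1 ≤ k) (hk2 : k ≤ n - 1) :
    ∃ a b : ℝ, 0 < a ∧ 0 < b ∧ a ≠ b ∧ Jfun n k a = Jfun n k b :=
  Jfun_not_injective_general n k hk1 hk2
end
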